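/- arXiv:1910.08745 — 12 statements merged into one kernel-verified Lean document; each statement's English description precedes it below -/
import Mathlib

section
/- For any single unicast index coding problem G on N receivers and any fixed finite alphabet A with |A| ≥ 2, the optimal broadcast rate at locality r = 1 equals the fractional chromatic number of the interference graph of G; that is, β*_G(1) = χ_f(interference graph of G). -/
/-- A valid (possibly non-linear) index code for the single unicast index coding problem
with side information sets `K i ⊆ [N] \ {i}`, over alphabet `A`, with message length `M`,
codelength `ℓ` and query sets `R i ⊆ [ℓ]`: there is an encoder and, for each receiver `i`,
a decoder recovering `x i` from the queried codeword symbols and the side information. -/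
def IsValidCode {N : ℕ} (K : Fin N → Finset (Fin N)) (A : Type) (M ℓ : ℕ)
    (R : Fin N → Finset (Fin ℓ)) : Prop :=
  ∃ E : (Fin N → Fin M → A) → (Fin ℓ → A),
    ∀ i : Fin N,
      ∃ D : ({k : Fin ℓ // k ∈ R i} → A) → ({j : Fin N // j ∈ K i} → Fin M → A) → (Fin M → A),
        ∀ x : Fin N → Fin M → A,
          D (fun k => E x k.1) (fun j => x j.1) = x i

lemma code_converse {N : ℕ} (K : Fin N → Finset (Fin N)) (hK : ∀ i, i ∉ K i)
    (A : Type) [Fintype A] (hA : 2 ≤ Fintype.card A)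
    {M ℓ : ℕ} {R : Fin N → Finset (Fin ℓ)} (hM : 0 < M)
    (hV : IsValidCode K A M ℓ R) (hloc : ∀ i, (R i).card ≤ M) :
    (∀ i, (R i).card = M) ∧
    ∀ i j : Fin N, i ≠ j → (i ∉ K j ∨ j ∉ K i) → Disjoint (R i) (R j) := by
  classical
  obtain ⟨E, hE⟩ := hV
  choose D hD using hE
  have hAne : Nonempty A := Fintype.card_pos_iff.mp (by omega)
  let x0 : Fin N → Fin M → A := fun _ _ => Classical.arbitrary A
  -- basic injectivity for each receiver
  have hinj : ∀ i, Function.Injective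
      (fun w : Fin M → A => fun k : {k // k ∈ R i} => E (Function.update x0 i w) k.1) := by
    intro i u v huv
    have h1 : D i (fun k => E (Function.update x0 i u) k.1)
        (fun j => Function.update x0 i u j.1) = u := by
      simpa using hD i (Function.update x0 i u)
    have h2 : D i (fun k => E (Function.update x0 i v) k.1)
        (fun j => Function.update x0 i v j.1) = v := by
      simpa using hD i (Function.update x0 i v)
    have hs : (fun j : {j // j ∈ K i} => Function.update x0 i u j.1)
        = (fun j : {j // j ∈ K i} => Function.update x0 i v j.1) := by
      funext j
      have hji : (j : Fin N) ≠ i := by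
        intro h; apply hK i; have h2 := j.2; rwa [h] at h2
      simp [Function.update_of_ne hji]
    have huv' : (fun k : {k // k ∈ R i} => E (Function.update x0 i u) k.1)
        = fun k : {k // k ∈ R i} => E (Function.update x0 i v) k.1 := huv
    rw [← h1, ← h2, huv', hs]
  have hcard : ∀ i, (R i).card = M := by
    intro i
    refine le_antisymm (hloc i) ?_
    have hle := Fintype.card_le_of_injective _ (hinj i)
    rw [Fintype.card_fun, Fintype.card_fun, Fintype.card_coe, Fintype.card_fin] at hle
    exact (Nat.pow_le_pow_iff_right (by omega : 1 < Fintype.card A)).mp hle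
  refine ⟨hcard, ?_⟩
  -- key asymmetric lemma
  have key : ∀ i j : Fin N, i ≠ j → j ∉ K i → ∀ k, k ∈ R i → k ∈ R j → False := by
    intro i j hij hjKi k hki hkj
    set g : (Fin M → A) → (Fin M → A) → ({k // k ∈ R i} → A) :=
      fun u w => fun k' => E (Function.update (Function.update x0 i w) j u) k'.1 with hg
    have hdec : ∀ u w, D i (g u w) (fun j' => x0 j'.1) = w := by
      intro u w
      have h := hD i (Function.update (Function.update x0 i w) j u)
      have hs : (fun j' : {j' // j' ∈ K i} =>
          Function.update (Function.update x0 i w) j u j'.1) = fun j' => x0 j'.1 := by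
        funext j'
        have h1 : (j' : Fin N) ≠ j := by
          intro h; apply hjKi; have hm := j'.2; rwa [h] at hm
        have h2 : (j' : Fin N) ≠ i := by
          intro h; apply hK i; have hm := j'.2; rwa [h] at hm
        simp [Function.update_of_ne h1, Function.update_of_ne h2]
      have hxi : Function.update (Function.update x0 i w) j u i = w := by
        rw [Function.update_of_ne hij, Function.update_self]
      rw [hs, hxi] at h
      exact h
    have hginj : ∀ u, Function.Injective (g u) := by
      intro u w w' h
      rw [← hdec u w, ← hdec u w', h]
    have hcardeq : Fintype.card (Fin M → A) = Fintype.card ({k // k ∈ R i} → A) := by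
      rw [Fintype.card_fun, Fintype.card_fun, Fintype.card_coe, Fintype.card_fin, hcard i]
    have hgsurj : ∀ u, Function.Surjective (g u) := fun u =>
      ((Fintype.bijective_iff_injective_and_card _).mpr ⟨hginj u, hcardeq⟩).2
    have hDinj : Function.Injective (fun y : {k // k ∈ R i} → A => D i y (fun j' => x0 j'.1)) := by
      intro y y' h
      obtain ⟨w, rfl⟩ := hgsurj (x0 i) y
      obtain ⟨w', rfl⟩ := hgsurj (x0 i) y'
      dsimp only at h
      rw [hdec, hdec] at h
      rw [h]
    have hind : ∀ u w, g u w = g (x0 j) w := by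
      intro u w
      apply hDinj
      dsimp only
      rw [hdec, hdec]
    have hh : ∀ u : Fin M → A, E (Function.update x0 j u) k = E (Function.update x0 j (x0 j)) k := by
      intro u
      have e1 : ∀ u', Function.update x0 j u' = Function.update (Function.update x0 i (x0 i)) j u' := by
        intro u'; rw [Function.update_eq_self]
      have h1 := congrFun (hind u (x0 i)) ⟨k, hki⟩
      have h2 := congrFun (hind (x0 j) (x0 i)) ⟨k, hki⟩
      simp only [hg] at h1 h2
      rw [e1 u, e1 (x0 j)]
      rw [h1]
    -- receiver j cannot decode: build injection into a smaller cube
    have hphi : Function.Injective (fun u : Fin M → A =>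
        fun k' : {k' // k' ∈ (R j).erase k} => E (Function.update x0 j u) k'.1) := by
      intro u v huv
      apply hinj j
      funext k'
      dsimp only
      by_cases he : k'.1 = k
      · rw [he, hh u, hh v]
      · exact congrFun huv ⟨k'.1, Finset.mem_erase.mpr ⟨he, k'.2⟩⟩
    have hle := Fintype.card_le_of_injective _ hphi
    rw [Fintype.card_fun, Fintype.card_fun, Fintype.card_coe, Fintype.card_fin,
      Finset.card_erase_of_mem hkj, hcard j] at hle
    have hlt : Fintype.card A ^ (M - 1) < Fintype.card A ^ M :=
      Nat.pow_lt_pow_right (by omega : 1 < Fintype.card A) (by omega : M - 1 < M)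
    omega
  intro i j hij hedge
  rw [Finset.disjoint_left]
  intro k hki hkj
  rcases hedge with h | h
  · exact key j i hij.symm h k hkj hki
  · exact key i j hij h k hki hkj

lemma code_achieve {N : ℕ} (K : Fin N → Finset (Fin N)) (hK : ∀ i, i ∉ K i)
    (A : Type) [Fintype A] (hA : 2 ≤ Fintype.card A)
    {a b : ℕ} (C : Fin N → Finset (Fin a)) (hC : ∀ i, (C i).card = b)
    (hdisj : ∀ i j : Fin N, i ≠ j → (i ∉ K j ∨ j ∉ K i) → Disjoint (C i) (C j)) :
    IsValidCode K A b a C := by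
  classical
  haveI : NeZero (Fintype.card A) := ⟨by omega⟩
  obtain ⟨e⟩ : Nonempty (A ≃ ZMod (Fintype.card A)) :=
    ⟨Fintype.equivOfCardEq (by simp)⟩
  have hσ : ∀ i, Fintype.card {k // k ∈ C i} = b := fun i => by
    rw [Fintype.card_coe, hC i]
  let σ : ∀ i, {k // k ∈ C i} ≃ Fin b := fun i => Fintype.equivFinOfCardEq (hσ i)
  refine ⟨fun x k => e.symm (∑ j : Fin N, if h : k ∈ C j then e (x j (σ j ⟨k, h⟩)) else 0), ?_⟩
  intro i
  refine ⟨fun y s m => e.symm (e (y ((σ i).symm m)) - ∑ j : Fin N,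
      if h : j ∈ K i ∧ (((σ i).symm m : {k // k ∈ C i}) : Fin a) ∈ C j
      then e (s ⟨j, h.1⟩ (σ j ⟨(((σ i).symm m : {k // k ∈ C i}) : Fin a), h.2⟩)) else 0), ?_⟩
  intro x
  funext m
  dsimp only
  set k0 : {k // k ∈ C i} := (σ i).symm m with hk0
  rw [Equiv.apply_symm_apply]
  rw [Equiv.symm_apply_eq]
  rw [← Finset.sum_sub_distrib]
  rw [Finset.sum_eq_single i]
  · rw [dif_pos k0.2, dif_neg (fun h : i ∈ K i ∧ (k0 : Fin a) ∈ C i => hK i h.1)]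
    rw [sub_zero]
    congr 1
    have : (⟨(k0 : Fin a), k0.2⟩ : {k // k ∈ C i}) = k0 := Subtype.eta _ _
    rw [this, hk0, Equiv.apply_symm_apply]
  · intro j _ hji
    by_cases hkj : (k0 : Fin a) ∈ C j
    · have hKij : j ∈ K i := by
        have hnd : ¬ Disjoint (C i) (C j) := by
          rw [Finset.disjoint_left]
          push_neg
          exact ⟨(k0 : Fin a), k0.2, hkj⟩
        by_contra hc
        exact hnd (hdisj i j (Ne.symm hji) (Or.inr hc))
      rw [dif_pos hkj, dif_pos ⟨hKij, hkj⟩, sub_self]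
    · rw [dif_neg hkj, dif_neg (fun h : j ∈ K i ∧ (k0 : Fin a) ∈ C j => hkj h.2), sub_self]
  · intro h; exact absurd (Finset.mem_univ i) h

/-- For any single unicast index coding problem `G` (given by `K`) and any
fixed finite alphabet `A` with `|A| ≥ 2`, the optimal broadcast rate at locality `r = 1`
equals the fractional chromatic number of the interference graph of `G`. -/
theorem optimal_rate_locality_one_eq_fractional_chromatic
    {N : ℕ} (hN : 0 < N) (K : Fin N → Finset (Fin N)) (hK : ∀ i, i ∉ K i)
    (A : Type) [Fintype A] (hA : 2 ≤ Fintype.card A) :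
    sInf {β : ℝ | ∃ (M ℓ : ℕ) (R : Fin N → Finset (Fin ℓ)),
        0 < M ∧ IsValidCode K A M ℓ R ∧ (∀ i, (R i).card ≤ M) ∧ β = (ℓ : ℝ) / M}
      = sInf {x : ℝ | ∃ a b : ℕ, 0 < a ∧ 0 < b ∧
          (∃ C : Fin N → Finset (Fin a), (∀ i, (C i).card = b) ∧
            ∀ i j : Fin N, i ≠ j → (i ∉ K j ∨ j ∉ K i) → Disjoint (C i) (C j)) ∧
          x = (a : ℝ) / b} := by
  have hsets : {β : ℝ | ∃ (M ℓ : ℕ) (R : Fin N → Finset (Fin ℓ)),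
        0 < M ∧ IsValidCode K A M ℓ R ∧ (∀ i, (R i).card ≤ M) ∧ β = (ℓ : ℝ) / M}
      = {x : ℝ | ∃ a b : ℕ, 0 < a ∧ 0 < b ∧
          (∃ C : Fin N → Finset (Fin a), (∀ i, (C i).card = b) ∧
            ∀ i j : Fin N, i ≠ j → (i ∉ K j ∨ j ∉ K i) → Disjoint (C i) (C j)) ∧
          x = (a : ℝ) / b} := by
    ext β
    simp only [Set.mem_setOf_eq]
    constructor
    · rintro ⟨M, ℓ, R, hM, hV, hloc, rfl⟩
      obtain ⟨hcard, hdisj⟩ := code_converse K hK A hA hM hV hloc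
      have hℓ : 0 < ℓ := by
        have h1 : (R ⟨0, hN⟩).card ≤ ℓ := by
          have := Finset.card_le_univ (R ⟨0, hN⟩)
          rwa [Fintype.card_fin] at this
        have h2 := hcard ⟨0, hN⟩
        omega
      exact ⟨ℓ, M, hℓ, hM, ⟨R, hcard, hdisj⟩, rfl⟩
    · rintro ⟨a, b, ha, hb, ⟨C, hC, hdisj⟩, rfl⟩
      exact ⟨b, a, C, hb, code_achieve K hK A hA C hC hdisj, fun i => (hC i).le, rfl⟩
  rw [hsets]
end

section
/- Let L ∈ F_q^{MN×ℓ} be a valid encoding matrix for the query sets R_1,...,R_N ⊆ [ℓ], and for each i ∈ [N] let S_i = R_i \ (∪_{j≠i} R_j) be the indices of codeword symbols queried only by receiver i. Then there exists a valid encoding matrix L' ∈ F_q^{MN×ℓ} for the same query sets R_1,...,R_N such that for each i ∈ [N] and each k ∈ S_i, the support of the column L'_k is contained in D_i. -/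
/-- A valid vector linear index code: `L` is a valid encoder matrix for query sets `R`
if every receiver `i` can decode each demanded component `(i, m)`, i.e. for each `m`
there is `u` supported on the side-information index set `𝒦_i = K i × Fin M` with
`u + e_{(i,m)} ∈ span(L_k : k ∈ R i)`. -/
def ValidVectorLinearCode {N M ℓ : ℕ} (q : Type) [Field q]
    (K : Fin N → Finset (Fin N))
    (L : Matrix (Fin N × Fin M) (Fin ℓ) q)
    (R : Fin N → Finset (Fin ℓ)) : Prop :=
  ∀ i : Fin N, ∀ m : Fin M,
    ∃ u : Fin N × Fin M → q,
      (∀ p : Fin N × Fin M, u p ≠ 0 → p.1 ∈ K i) ∧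
      u + Pi.single (i, m) 1 ∈
        Submodule.span q ((fun k (p : Fin N × Fin M) => L p k) '' (R i : Set (Fin ℓ)))

open Submodule Module

/-- Submodule of functions supported on `T`. -/
def IndexCoding.suppSub {N M : ℕ} (q : Type) [Field q] (T : Set (Fin N × Fin M)) :
    Submodule q (Fin N × Fin M → q) where
  carrier := {u | ∀ p, u p ≠ 0 → p ∈ T}
  add_mem' := by
    intro a b ha hb p hp
    by_contra hT
    have h1 : a p = 0 := by by_contra h; exact hT (ha p h)
    have h2 : b p = 0 := by by_contra h; exact hT (hb p h)
    exact hp (by simp [h1, h2])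
  zero_mem' := by intro p hp; simp at hp
  smul_mem' := by
    intro c a ha p hp
    refine ha p fun h => hp ?_
    simp [h]

lemma IndexCoding.mem_suppSub {N M : ℕ} {q : Type} [Field q] {T : Set (Fin N × Fin M)}
    {u : Fin N × Fin M → q} : u ∈ IndexCoding.suppSub q T ↔ ∀ p, u p ≠ 0 → p ∈ T :=
  Iff.rfl

lemma IndexCoding.key {N M ℓ : ℕ} (q : Type) [Field q]
    (K : Fin N → Finset (Fin N))
    (L : Matrix (Fin N × Fin M) (Fin ℓ) q)
    (R : Fin N → Finset (Fin ℓ))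
    (hL : ValidVectorLinearCode q K L R) (i : Fin N) :
    ∃ ν : Fin ℓ → (Fin N × Fin M → q),
      (∀ k p, ν k p ≠ 0 → p.1 = i) ∧
      ∀ m : Fin M, ∃ u : Fin N × Fin M → q,
        (∀ p, u p ≠ 0 → p.1 ∈ K i) ∧
        u + Pi.single (i, m) 1 ∈
          span q (ν '' {k | k ∈ R i ∧ ∀ j, j ≠ i → k ∉ R j}) ⊔
          span q ((fun k (p : Fin N × Fin M) => L p k) ''
            {k | k ∈ R i ∧ ¬ ∀ j, j ≠ i → k ∉ R j}) := by
  classical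
  set onlyS : Set (Fin ℓ) := {k | k ∈ R i ∧ ∀ j, j ≠ i → k ∉ R j} with honlyS
  set restS : Set (Fin ℓ) := {k | k ∈ R i ∧ ¬ ∀ j, j ≠ i → k ∉ R j} with hrestS
  set colL : Fin ℓ → (Fin N × Fin M → q) := fun k (p : Fin N × Fin M) => L p k with hcolL
  set Z : Submodule q (Fin N × Fin M → q) := IndexCoding.suppSub q {p | p.1 ∈ K i} with hZ
  set Dsub : Submodule q (Fin N × Fin M → q) := IndexCoding.suppSub q {p | p.1 = i} with hDsub
  set spanRest := span q (colL '' restS) with hspanRest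
  set spanOnly := span q (colL '' onlyS) with hspanOnly
  set X := spanRest ⊔ Z with hX
  set π := X.mkQ with hπ
  have he_mem : ∀ m : Fin M, π (Pi.single (i, m) 1) ∈ Submodule.map π spanOnly := by
    intro m
    obtain ⟨u, hu, hmem⟩ := hL i m
    have hsplit : span q (colL '' (R i : Set (Fin ℓ))) ≤ spanOnly ⊔ spanRest := by
      rw [span_le]
      rintro v ⟨k, hk, rfl⟩
      by_cases h : ∀ j, j ≠ i → k ∉ R j
      · exact mem_sup_left (subset_span ⟨k, ⟨hk, h⟩, rfl⟩)
      · exact mem_sup_right (subset_span ⟨k, ⟨hk, h⟩, rfl⟩)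
    have h1 : u + Pi.single (i, m) 1 ∈ spanOnly ⊔ X := by
      refine SetLike.le_def.mp ?_ (hsplit hmem)
      exact sup_le_sup_left le_sup_left spanOnly
    have hu' : u ∈ spanOnly ⊔ X :=
      mem_sup_right (mem_sup_right (IndexCoding.mem_suppSub.mpr hu))
    have he : Pi.single (i, m) 1 ∈ spanOnly ⊔ X := by
      have := sub_mem h1 hu'
      simpa using this
    obtain ⟨s, hs, x, hx, hsx⟩ := mem_sup.mp he
    refine ⟨s, hs, ?_⟩
    have hx0 : π x = 0 := by
      rw [hπ, ← LinearMap.mem_ker, Submodule.ker_mkQ]; exact hx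
    rw [← hsx, map_add, hx0, add_zero]
  set Dspan := span q (Set.range fun m : Fin M => (Pi.single (i, m) 1 : Fin N × Fin M → q))
    with hDspan
  set Dbar := Submodule.map π Dspan with hDbar
  set Pbar := Submodule.map π spanOnly with hPbar
  have hDP : Dbar ≤ Pbar := by
    rw [hDbar, hDspan, Submodule.map_span, span_le]
    rintro v ⟨w, ⟨m, rfl⟩, rfl⟩
    exact he_mem m
  set Sfin : Finset (Fin ℓ) :=
    Finset.univ.filter (fun k => k ∈ R i ∧ ∀ j, j ≠ i → k ∉ R j) with hSfin
  have hSfin_only : (Sfin : Set (Fin ℓ)) = onlyS := by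
    ext k; simp [hSfin, honlyS]
  have hfin : finrank q Dbar ≤ Sfin.card := by
    have h1 : finrank q Dbar ≤ finrank q Pbar := Submodule.finrank_mono hDP
    have h2 : Pbar = span q ((Sfin.image (fun k => π (colL k)) : Finset _) : Set _) := by
      rw [hPbar, hspanOnly, Submodule.map_span, ← hSfin_only, Finset.coe_image,
        Set.image_image]
    have h3 : finrank q Pbar ≤ (Sfin.image (fun k => π (colL k))).card := by
      rw [h2]; exact finrank_span_finset_le_card _
    exact le_trans h1 (le_trans h3 (Finset.card_image_le))
  set n := finrank q Dbar with hn
  obtain ⟨f, hfrange⟩ :=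
    Function.Embedding.exists_of_card_le_finset
      (by simpa using hfin : Fintype.card (Fin n) ≤ Sfin.card)
  set b := Module.finBasis q ↥Dbar with hb
  have hbmem : ∀ t : Fin n, ((b t : ↥Dbar) : (Fin N × Fin M → q) ⧸ X) ∈ Dbar :=
    fun t => (b t).2
  have hd : ∀ t : Fin n, ∃ y, y ∈ Dspan ∧ π y = ((b t : ↥Dbar) : _) := by
    intro t
    obtain ⟨y, hy, hyp⟩ := Submodule.mem_map.mp (hbmem t)
    exact ⟨y, hy, hyp⟩
  choose d hd1 hd2 using hd
  set ν : Fin ℓ → (Fin N × Fin M → q) :=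
    fun k => if h : ∃ t, f t = k then d h.choose else 0 with hν
  have hDspanD : Dspan ≤ Dsub := by
    rw [hDspan, span_le]
    rintro v ⟨m, rfl⟩
    intro p hp
    rcases eq_or_ne p (i, m) with h | h
    · rw [h]; exact rfl
    · exact absurd (Pi.single_eq_of_ne h 1) hp
  have hνD : ∀ k p, ν k p ≠ 0 → p.1 = i := by
    intro k p
    simp only [hν]
    split_ifs with h
    · exact fun hp => hDspanD (hd1 _) p hp
    · intro hp; simp at hp
  have hνf : ∀ t, ν (f t) = d t := by
    intro t
    have h : ∃ t', f t' = f t := ⟨t, rfl⟩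
    rw [hν]
    simp only [dif_pos h]
    exact congrArg d (f.injective h.choose_spec)
  have hcover : ∀ m : Fin M,
      π (Pi.single (i, m) 1) ∈ Submodule.map π (span q (ν '' onlyS)) := by
    intro m
    have h1 : π (Pi.single (i, m) 1) ∈ Dbar :=
      ⟨Pi.single (i, m) 1, subset_span ⟨m, rfl⟩, rfl⟩
    have h2 : Dbar ≤ Submodule.map π (span q (ν '' onlyS)) := by
      have hb2 : Dbar = span q (Set.range fun t : Fin n =>
          ((b t : ↥Dbar) : (Fin N × Fin M → q) ⧸ X)) := by
        conv_lhs => rw [← Submodule.map_subtype_top Dbar, ← b.span_eq]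
        rw [Submodule.map_span, ← Set.range_comp]
        rfl
      rw [hb2, span_le]
      rintro v ⟨t, rfl⟩
      rw [Submodule.map_span]
      apply subset_span
      refine ⟨ν (f t), ⟨f t, ?_, rfl⟩, ?_⟩
      · have : f t ∈ Sfin := hfrange (Set.mem_range_self t)
        rw [← hSfin_only]; exact this
      · rw [hνf t, hd2 t]
    exact h2 h1
  refine ⟨ν, hνD, ?_⟩
  intro m
  obtain ⟨a, ha, hπa⟩ := hcover m
  have hx : Pi.single (i, m) 1 - a ∈ X := by
    have hπ0 : π (Pi.single (i, m) 1 - a) = 0 := by rw [map_sub, hπa, sub_self]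
    have hker : Pi.single (i, m) 1 - a ∈ LinearMap.ker π := LinearMap.mem_ker.mpr hπ0
    rwa [hπ, Submodule.ker_mkQ] at hker
  obtain ⟨w, hw, z, hz, hwz⟩ := mem_sup.mp (hX ▸ hx)
  refine ⟨-z, ?_, ?_⟩
  · intro p hp
    exact (IndexCoding.mem_suppSub.mp hz) p (by simpa using hp)
  · have hkey : -z + Pi.single (i, m) 1 = a + w := by
      have h : Pi.single (i, m) 1 = w + z + a := by
        rw [hwz]; abel
      rw [h]; abel
    rw [hkey]
    exact add_mem (mem_sup_left ha) (mem_sup_right hw)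

/-- If `L` is a valid encoding matrix for the query sets `R_1,…,R_N`,
then there is a valid encoding matrix `L'` for the same query sets such that every column
`k ∈ S_i = R_i \ ∪_{j≠i} R_j` (queried only by receiver `i`) has support inside the
demand index set `D_i` of receiver `i`. -/
theorem exists_encoder_with_singleton_query_columns_supported_on_demand
    {N M ℓ : ℕ} (q : Type) [Field q] [Fintype q]
    (K : Fin N → Finset (Fin N)) (hK : ∀ i, i ∉ K i)
    (L : Matrix (Fin N × Fin M) (Fin ℓ) q)
    (R : Fin N → Finset (Fin ℓ))
    (hL : ValidVectorLinearCode q K L R) :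
    ∃ L' : Matrix (Fin N × Fin M) (Fin ℓ) q,
      ValidVectorLinearCode q K L' R ∧
      ∀ i : Fin N, ∀ k ∈ R i, (∀ j : Fin N, j ≠ i → k ∉ R j) →
        ∀ p : Fin N × Fin M, L' p k ≠ 0 → p.1 = i := by
  classical
  choose ν hν using fun i => IndexCoding.key q K L R hL i
  set L' : Matrix (Fin N × Fin M) (Fin ℓ) q := fun p k =>
    if h : ∃ i, k ∈ R i ∧ ∀ j, j ≠ i → k ∉ R j then ν h.choose k p else L p k with hL'
  have huniq : ∀ i k, k ∈ R i → (∀ j, j ≠ i → k ∉ R j) →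
      ∀ h : ∃ i', k ∈ R i' ∧ ∀ j, j ≠ i' → k ∉ R j, h.choose = i := by
    intro i k hk honly h
    by_contra hne
    exact (honly h.choose hne) h.choose_spec.1
  have hcol_only : ∀ i k, k ∈ R i → (∀ j, j ≠ i → k ∉ R j) →
      (fun p => L' p k) = ν i k := by
    intro i k hk ho
    funext p
    have h : ∃ i', k ∈ R i' ∧ ∀ j, j ≠ i' → k ∉ R j := ⟨i, hk, ho⟩
    rw [hL']
    simp only [dif_pos h]
    rw [huniq i k hk ho h]
  have hcol_rest : ∀ i k, k ∈ R i → ¬ (∀ j, j ≠ i → k ∉ R j) →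
      (fun p => L' p k) = fun p => L p k := by
    intro i k hk hno
    funext p
    have h : ¬ ∃ i', k ∈ R i' ∧ ∀ j, j ≠ i' → k ∉ R j := by
      rintro ⟨i', hk', ho'⟩
      rcases eq_or_ne i' i with h | h
      · exact hno (h ▸ ho')
      · exact (ho' i (Ne.symm h)) hk
    rw [hL']
    simp only [dif_neg h]
  refine ⟨L', ?_, ?_⟩
  · intro i m
    obtain ⟨u, hu, hmem⟩ := (hν i).2 m
    refine ⟨u, hu, ?_⟩
    have hle : span q (ν i '' {k | k ∈ R i ∧ ∀ j, j ≠ i → k ∉ R j}) ⊔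
        span q ((fun k (p : Fin N × Fin M) => L p k) ''
          {k | k ∈ R i ∧ ¬ ∀ j, j ≠ i → k ∉ R j}) ≤
        span q ((fun k (p : Fin N × Fin M) => L' p k) '' (R i : Set (Fin ℓ))) := by
      refine sup_le ?_ ?_ <;> rw [span_le]
      · rintro v ⟨k, ⟨hk, ho⟩, rfl⟩
        exact subset_span ⟨k, hk, hcol_only i k hk ho⟩
      · rintro v ⟨k, ⟨hk, ho⟩, rfl⟩
        exact subset_span ⟨k, hk, hcol_rest i k hk ho⟩
    exact hle hmem
  · intro i k hk ho p hp
    have h : ∃ i', k ∈ R i' ∧ ∀ j, j ≠ i' → k ∉ R j := ⟨i, hk, ho⟩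
    rw [hL'] at hp
    simp only [dif_pos h] at hp
    rw [huniq i k hk ho h] at hp
    exact (hν i).1 k p hp
end

section
/- Let N ≥ 3 and let G be the directed N-cycle. For any finite field F_q, the optimal trade-off between broadcast rate and locality among vector linear index codes for G over F_q is β*_{G,q}(r) = max{ N(N−1−r)/(N−2), N−1 } for all r ≥ 1. -/
/-!
For the lower bound fix a receiver `j`. Walking backwards round the cycle, receiver `i ≠ j`
recovers `x i` from its queries and `x (i + 1)`, so the columns queried by the receivers other
than `j`, together with the `M` unit vectors of `x j`, span `q ^ (N M)`:
`N M ≤ #(⋃ i ≠ j, R i) + M`. This gives `β ≥ N - 1` directly, and summed over `j` it gives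
`N (N - 1 - r) ≤ (N - 2) β`, because a column queried by `d` receivers lies in at most
`N - 2 + d` of the unions.

For the upper bound, a message coordinate can be sent either as all `N` differences
`x (v, m) - x (v + 1, m)`, or with one difference, at a pivot vertex `t`, left out: receiver `t`
then recovers its difference as minus the sum of the other `N - 1`. If a fraction `x ≤ 1 / N`
of the coordinates is pivoted, evenly over the vertices, the rate is `N - N x` and the locality
`1 + (N - 2) x`; taking `x = b / M` just below `min ((r - 1) / (N - 2)) (1 / N)` gives rates
arbitrarily close to the bound.
-/

open Finset

def achievableRates {N : ℕ} (q : Type) [Field q] (K : Fin N → Finset (Fin N)) (r : ℝ) :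
    Set ℝ :=
  {β : ℝ | ∃ (M ℓ : ℕ) (L : Matrix (Fin N × Fin M) (Fin ℓ) q) (R : Fin N → Finset (Fin ℓ)),
    0 < M ∧ ValidVectorLinearCode q K L R ∧ (∀ i, ((R i).card : ℝ) ≤ r * M) ∧ β = (ℓ : ℝ) / M}

noncomputable def directedCycleRate (N : ℕ) (r : ℝ) : ℝ :=
  max ((N : ℝ) * ((N : ℝ) - 1 - r) / ((N : ℝ) - 2)) ((N : ℝ) - 1)

open Fin.NatCast Fin.CommRing in
lemma Fin.cyclic_backward_induction {N : ℕ} [NeZero N] {P : Fin N → Prop} {j : Fin N}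
    (hj : P j) (step : ∀ i, i ≠ j → P (i + 1) → P i) (i : Fin N) : P i := by
  have key : ∀ k : ℕ, k < N → P (j - k) := by
    intro k
    induction k with
    | zero => simpa using fun _ => hj
    | succ k ih =>
      intro hk
      refine step _ (fun h => ?_) (by simpa [sub_add] using ih (by omega))
      have : ((k + 1 : ℕ) : Fin N) = 0 := sub_eq_self.mp h
      rw [Fin.natCast_eq_zero] at this
      exact absurd (Nat.le_of_dvd (by omega) this) (by omega)
  simpa using key (j - i : Fin N) (j - i).is_lt

section Counting

variable {ι α : Type*} [Fintype ι] [DecidableEq α]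

lemma sum_card_eq_sum_card_filter_mem [Fintype α] (S : ι → Finset α) :
    ∑ j, #(S j) = ∑ a, #{j | a ∈ S j} := by
  simp_rw [card_eq_sum_ones, sum_filter]
  rw [sum_comm]
  simp

variable [DecidableEq ι]

lemma card_filter_mem_biUnion_erase_le (R : ι → Finset α) (a : α) :
    #{j | a ∈ (univ.erase j).biUnion R} ≤ Fintype.card ι - 2 + #{i | a ∈ R i} := by
  have hmem : ∀ j, a ∈ (univ.erase j).biUnion R ↔ ∃ i ≠ j, a ∈ R i := by simp
  obtain h0 | h1 | h2 : #{i | a ∈ R i} = 0 ∨ #{i | a ∈ R i} = 1 ∨ 2 ≤ #{i | a ∈ R i} := by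
    omega
  · have : ∀ i, a ∉ R i := by simpa using h0
    simp [hmem, this]
  · obtain ⟨i₀, hi₀⟩ := card_eq_one.mp h1
    have hsub : ({j | a ∈ (univ.erase j).biUnion R} : Finset ι) ⊆ univ.erase i₀ := by
      intro j hj
      obtain ⟨i, hij, hi⟩ := (hmem j).mp (mem_filter.mp hj).2
      have : i ∈ ({i | a ∈ R i} : Finset ι) := mem_filter.mpr ⟨mem_univ i, hi⟩
      obtain rfl : i = i₀ := by simpa [hi₀] using this
      simpa using hij.symm
    have := card_le_card hsub
    rw [card_erase_of_mem (mem_univ _), card_univ] at this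
    omega
  · have := card_le_univ {j | a ∈ (univ.erase j).biUnion R}
    omega

lemma sum_card_biUnion_erase_le [Fintype α] (R : ι → Finset α) :
    ∑ j, #((univ.erase j).biUnion R) ≤
      (Fintype.card ι - 2) * Fintype.card α + ∑ i, #(R i) := by
  calc ∑ j, #((univ.erase j).biUnion R)
      = ∑ a, #{j | a ∈ (univ.erase j).biUnion R} := sum_card_eq_sum_card_filter_mem _
    _ ≤ ∑ a, (Fintype.card ι - 2 + #{i | a ∈ R i}) :=
      sum_le_sum fun a _ => card_filter_mem_biUnion_erase_le R a
    _ = (Fintype.card ι - 2) * Fintype.card α + ∑ i, #(R i) := by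
      rw [sum_add_distrib, ← sum_card_eq_sum_card_filter_mem, sum_const, card_univ,
        smul_eq_mul, mul_comm]

end Counting

section LowerBound

variable {N M ℓ : ℕ} {q : Type} [Field q] {L : Matrix (Fin N × Fin M) (Fin ℓ) q}
  {R : Fin N → Finset (Fin ℓ)}

lemma single_mem_of_validVectorLinearCode {K : Fin N → Finset (Fin N)}
    (hL : ValidVectorLinearCode q K L R) {W : Submodule q (Fin N × Fin M → q)} {i : Fin N}
    (hR : ∀ k ∈ R i, (fun p => L p k) ∈ W)
    (hK : ∀ p : Fin N × Fin M, p.1 ∈ K i → Pi.single p 1 ∈ W) (m : Fin M) :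
    Pi.single (i, m) 1 ∈ W := by
  obtain ⟨u, hu, hdec⟩ := hL i m
  have hspan : Submodule.span q ((fun k p => L p k) '' (R i : Set (Fin ℓ))) ≤ W :=
    Submodule.span_le.mpr <| by rintro _ ⟨k, hk, rfl⟩; exact hR k hk
  have huW : u ∈ W := by
    rw [← univ_sum_single u]
    refine Submodule.sum_mem _ fun p _ => ?_
    by_cases hp : u p = 0
    · simp [hp]
    · simpa [← Pi.single_smul'] using W.smul_mem (u p) (hK p (hu p hp))
  simpa using W.sub_mem (hspan hdec) huW

variable [NeZero N]

lemma mul_le_card_biUnion_erase_add (hL : ValidVectorLinearCode q (fun i => {i + 1}) L R)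
    (j : Fin N) :
    N * M ≤ #((univ.erase j).biUnion R) + M := by
  classical
  set W := Submodule.span q ((fun k p => L p k) '' ((univ.erase j).biUnion R : Set (Fin ℓ))) ⊔
    Submodule.span q (Set.range fun m => (Pi.single (j, m) 1 : Fin N × Fin M → q))
  have hsingle : ∀ i m, Pi.single (i, m) 1 ∈ W := by
    refine Fin.cyclic_backward_induction (j := j)
      (fun m => Submodule.mem_sup_right (Submodule.subset_span ⟨m, rfl⟩))
      fun i hij hi m => single_mem_of_validVectorLinearCode hL (fun k hk => ?_) ?_ m
    · exact Submodule.mem_sup_left <| Submodule.subset_span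
        ⟨k, by simpa using ⟨i, hij, hk⟩, rfl⟩
    · rintro ⟨i', m'⟩ h
      obtain rfl : i' = i + 1 := by simpa using h
      exact hi m'
  have hW : W = ⊤ := by
    refine eq_top_iff.mpr fun x _ => ?_
    rw [← univ_sum_single x]
    exact Submodule.sum_mem _ fun p _ => by
      simpa [← Pi.single_smul'] using W.smul_mem (x p) (hsingle p.1 p.2)
  calc N * M = Module.finrank q W := by
        rw [hW, finrank_top, Module.finrank_fintype_fun_eq_card, Fintype.card_prod,
          Fintype.card_fin, Fintype.card_fin]
    _ ≤ _ := Submodule.finrank_add_le_finrank_add_finrank _ _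
    _ ≤ #((univ.erase j).biUnion R) + M := by
      gcongr
      · rw [← coe_image]
        exact (finrank_span_finset_le_card _).trans card_image_le
      · exact (finrank_range_le_card _).trans (Fintype.card_fin M).le

lemma directedCycleRate_le_div (hN : 3 ≤ N)
    (hL : ValidVectorLinearCode q (fun i => {i + 1}) L R) (hM : 0 < M) {r : ℝ}
    (hloc : ∀ i, (#(R i) : ℝ) ≤ r * M) :
    directedCycleRate N r ≤ ℓ / M := by
  have hcut := mul_le_card_biUnion_erase_add hL
  have hone : N * M ≤ ℓ + M :=
    (hcut 0).trans (Nat.add_le_add_right ((card_le_univ _).trans (Fintype.card_fin ℓ).le) M)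
  have hall : N * (N * M) ≤ (N - 2) * ℓ + ∑ i, #(R i) + N * M := by
    have hsum := sum_le_sum fun j (_ : j ∈ univ) => hcut j
    have hcount := sum_card_biUnion_erase_le R
    simp only [sum_const, sum_add_distrib, card_univ, Fintype.card_fin, smul_eq_mul]
      at hsum hcount
    omega
  have hMR : (0 : ℝ) < M := by exact_mod_cast hM
  have hNR : (3 : ℝ) ≤ N := by exact_mod_cast hN
  have hallR : (N : ℝ) * (N * M) ≤ (N - 2) * ℓ + N * (r * M) + N * M := by
    have hsum : ∑ i, (#(R i) : ℝ) ≤ N * (r * M) := by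
      simpa using sum_le_sum fun i (_ : i ∈ univ) => hloc i
    have : ((N * (N * M) : ℕ) : ℝ) ≤ ((N - 2) * ℓ + ∑ i, #(R i) + N * M : ℕ) := by
      exact_mod_cast hall
    push_cast [Nat.cast_sub (by omega : 2 ≤ N)] at this
    linarith
  have honeR : (N : ℝ) * M ≤ ℓ + M := by exact_mod_cast hone
  refine max_le ?_ ?_
  · rw [div_le_div_iff₀ (by linarith) hMR]
    nlinarith
  · rw [le_div_iff₀ hMR]
    linarith

end LowerBound

lemma exists_pivot_card_fiber_eq {N M b : ℕ} (h : b * N ≤ M) :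
    ∃ π : Fin M → Option (Fin N), ∀ i, #{m | π m = some i} = b := by
  let e : Fin M ≃ Fin (M - b * N) ⊕ Fin b × Fin N :=
    (finCongr (by omega)).trans <| finSumFinEquiv.symm.trans <|
      Equiv.sumCongr (Equiv.refl _) finProdFinEquiv.symm
  refine ⟨fun m => (e m).elim (fun _ => none) (fun p => some p.2), fun i => ?_⟩
  rw [card_filter, Fintype.sum_equiv e _
    (fun x => if x.elim (fun _ => none) (fun p => some p.2) = some i then 1 else 0)
    fun _ => rfl]
  simp only [Fintype.sum_sum_type, Fintype.sum_prod_type]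
  simp

section PivotCode

variable {N M : ℕ} (π : Fin M → Option (Fin N))

/-- A coordinate `m` with pivot `π m = some t` is sent as the differences
`x (v, m) - x (v + 1, m)` for `v ≠ t`, one without pivot as all `N` of them. The difference at
`(v, m)` is queried by receiver `v` and, if `m` has pivot `t`, by receiver `t`. -/
def pivotColumns : Finset (Fin N × Fin M) := {p | π p.2 ≠ some p.1}

noncomputable def pivotQueries (i : Fin N) : Finset (Fin #(pivotColumns π)) :=
  {k | ((pivotColumns π).equivFin.symm k).1.1 = i ∨
    π ((pivotColumns π).equivFin.symm k).1.2 = some i}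

lemma card_pivotColumns_add_sum_card :
    #(pivotColumns π) + ∑ v, #{m | π m = some v} = N * M := by
  have hpiv : #({p | π p.2 = some p.1} : Finset (Fin N × Fin M)) =
      ∑ v, #{m | π m = some v} := by
    simp only [card_filter, Fintype.sum_prod_type]
  rw [pivotColumns, ← hpiv, add_comm, card_filter_add_card_filter_not]
  simp

lemma card_pivotQueries (i : Fin N) :
    (#(pivotQueries π i) : ℝ) = M + (N - 2) * #{m | π m = some i} := by
  have hsub : #(pivotQueries π i) = #{p ∈ pivotColumns π | p.1 = i ∨ π p.2 = some i} := by
    rw [pivotQueries, card_filter, card_filter, ← sum_coe_sort (pivotColumns π)]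
    exact Fintype.sum_equiv (pivotColumns π).equivFin.symm _ _ fun k => rfl
  have hcol : ∀ m, ∑ v : Fin N, (if π m ≠ some v ∧ (v = i ∨ π m = some i) then 1 else 0 : ℝ) =
      1 + (N - 2) * if π m = some i then 1 else 0 := by
    intro m
    by_cases hm : π m = some i
    · simp [hm, sum_ite, filter_ne, Nat.cast_sub i.pos]
      ring
    · have : ({v | π m ≠ some v ∧ v = i} : Finset (Fin N)) = {i} := by
        ext v
        simp only [mem_filter, mem_univ, true_and, mem_singleton]
        exact ⟨And.right, by rintro rfl; exact ⟨hm, rfl⟩⟩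
      simp [hm, this]
  rw [hsub, pivotColumns, filter_filter, natCast_card_filter, Fintype.sum_prod_type, sum_comm]
  simp only [hcol, sum_add_distrib, ← mul_sum, sum_boole]
  simp

variable [NeZero N] (q : Type) [Field q]

def cycleEdgeVector (p : Fin N × Fin M) : Fin N × Fin M → q :=
  Pi.single p 1 - Pi.single (p.1 + 1, p.2) 1

lemma sum_cycleEdgeVector (m : Fin M) : ∑ v : Fin N, cycleEdgeVector q (v, m) = 0 := by
  simp only [cycleEdgeVector, sum_sub_distrib, sub_eq_zero]
  exact (Fintype.sum_equiv (Equiv.addRight 1) _ _ fun v => rfl).symm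

noncomputable def pivotCode : Matrix (Fin N × Fin M) (Fin #(pivotColumns π)) q :=
  fun p k => cycleEdgeVector q ((pivotColumns π).equivFin.symm k) p

lemma cycleEdgeVector_mem_span_pivotCode {i : Fin N} {p : Fin N × Fin M}
    (hp : p ∈ pivotColumns π) (hi : p.1 = i ∨ π p.2 = some i) :
    cycleEdgeVector q p ∈ Submodule.span q
      ((fun k p => pivotCode π q p k) '' (pivotQueries π i : Set (Fin #(pivotColumns π)))) := by
  refine Submodule.subset_span ⟨(pivotColumns π).equivFin ⟨p, hp⟩, ?_, ?_⟩
  · simpa [pivotQueries] using hi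
  · simp [pivotCode]

lemma validVectorLinearCode_pivotCode :
    ValidVectorLinearCode q (fun i => {i + 1}) (pivotCode π q) (pivotQueries π) := by
  intro i m
  refine ⟨-Pi.single (i + 1, m) 1, fun p hp => ?_, ?_⟩
  · rw [mem_singleton]
    by_contra h
    exact hp (by simp [Prod.ext_iff, h])
  · rw [neg_add_eq_sub, ← cycleEdgeVector]
    by_cases hm : π m = some i
    · have hsum := add_sum_erase univ (fun v => cycleEdgeVector q (v, m)) (mem_univ i)
      rw [sum_cycleEdgeVector] at hsum
      rw [eq_neg_of_add_eq_zero_left hsum]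
      refine Submodule.neg_mem _ (Submodule.sum_mem _ fun v hv => ?_)
      exact cycleEdgeVector_mem_span_pivotCode π q
        (by simpa [pivotColumns, hm] using (ne_of_mem_erase hv).symm) (Or.inr hm)
    · exact cycleEdgeVector_mem_span_pivotCode π q (by simpa [pivotColumns] using hm)
        (Or.inl rfl)

end PivotCode

section UpperBound

variable {N M : ℕ} [NeZero N] (q : Type) [Field q] {r : ℝ}

lemma sub_mul_div_mem_achievableRates {b : ℕ} (hM : 0 < M) (hbN : b * N ≤ M)
    (hbr : ((N : ℝ) - 2) * b ≤ (r - 1) * M) :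
    (N : ℝ) - N * b / M ∈ achievableRates q (fun i : Fin N => {i + 1}) r := by
  obtain ⟨π, hπ⟩ := exists_pivot_card_fiber_eq hbN
  have hMR : (0 : ℝ) < M := by exact_mod_cast hM
  refine ⟨M, _, pivotCode π q, pivotQueries π, hM, validVectorLinearCode_pivotCode π q,
    fun i => ?_, ?_⟩
  · rw [card_pivotQueries, hπ]
    linarith
  · have hcard := card_pivotColumns_add_sum_card π
    simp only [hπ, sum_const, card_univ, Fintype.card_fin, smul_eq_mul] at hcard
    have hcardR : (#(pivotColumns π) : ℝ) = N * M - N * b := by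
      rw [eq_sub_iff_add_eq]
      exact_mod_cast hcard
    rw [hcardR]
    field_simp

lemma exists_mem_achievableRates_le_add (hN : 3 ≤ N) (hr : 1 ≤ r) (hM : 0 < M) :
    ∃ β ∈ achievableRates q (fun i : Fin N => {i + 1}) r,
      β ≤ directedCycleRate N r + N / M := by
  have hNR : (3 : ℝ) ≤ N := by exact_mod_cast hN
  have hMR : (0 : ℝ) < M := by exact_mod_cast hM
  have hN2 : (N : ℝ) - 2 ≠ 0 := by linarith
  -- the largest admissible fraction of pivoted coordinates
  set x := min ((r - 1) / (N - 2)) (1 / N)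
  have hx : 0 ≤ x := le_min (div_nonneg (by linarith) (by linarith)) (by positivity)
  set b := ⌊x * M⌋₊
  have hb : (b : ℝ) ≤ x * M := Nat.floor_le (by positivity)
  have hb' : x * M < b + 1 := Nat.lt_floor_add_one _
  have hbN : b * N ≤ M := by
    have : (b : ℝ) * N ≤ M := calc
      (b : ℝ) * N ≤ x * M * N := by gcongr
      _ ≤ 1 / N * M * N := by gcongr; exact min_le_right _ _
      _ = M := by field_simp
    exact_mod_cast this
  have hbr : ((N : ℝ) - 2) * b ≤ (r - 1) * M := calc
    ((N : ℝ) - 2) * b ≤ (N - 2) * (x * M) := by gcongr; linarith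
    _ ≤ (N - 2) * ((r - 1) / (N - 2) * M) := by gcongr; linarith; exact min_le_left _ _
    _ = (r - 1) * M := by field_simp
  refine ⟨_, sub_mul_div_mem_achievableRates q hM hbN hbr, ?_⟩
  have hvertex : (N : ℝ) - N * x ≤ directedCycleRate N r := by
    rcases min_choice ((r - 1) / (N - 2)) (1 / (N : ℝ)) with h | h <;> rw [show x = _ from h]
    · exact le_max_of_le_left (le_of_eq (by field_simp; ring))
    · exact le_max_of_le_right (le_of_eq (by field_simp))
  have : (N : ℝ) * x - N / M ≤ N * b / M := by
    rw [sub_le_iff_le_add, ← add_div, le_div_iff₀ hMR]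
    nlinarith
  linarith

end UpperBound

theorem directed_cycle_vector_linear_tradeoff_general
    {N : ℕ} [NeZero N] (hN : 3 ≤ N) (q : Type) [Field q]
    (r : ℝ) (hr : 1 ≤ r) :
    sInf {β : ℝ | ∃ (M ℓ : ℕ) (L : Matrix (Fin N × Fin M) (Fin ℓ) q)
        (R : Fin N → Finset (Fin ℓ)),
        0 < M ∧ ValidVectorLinearCode q (fun i : Fin N => {i + 1}) L R ∧
        (∀ i, ((R i).card : ℝ) ≤ r * M) ∧ β = (ℓ : ℝ) / M}
      = max ((N : ℝ) * ((N : ℝ) - 1 - r) / ((N : ℝ) - 2)) ((N : ℝ) - 1) := by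
  change sInf (achievableRates q (fun i : Fin N => {i + 1}) r) = directedCycleRate N r
  have hlower : ∀ β ∈ achievableRates q (fun i : Fin N => {i + 1}) r,
      directedCycleRate N r ≤ β := by
    rintro _ ⟨M, ℓ, L, R, hM, hL, hloc, rfl⟩
    exact directedCycleRate_le_div hN hL hM hloc
  refine le_antisymm (le_of_forall_pos_lt_add fun ε hε => ?_) ?_
  · obtain ⟨M, hM⟩ := exists_nat_gt ((N : ℝ) / ε)
    have hM0 : (0 : ℝ) < M := (div_pos (by positivity) hε).trans hM
    obtain ⟨β, hβ, hβle⟩ := exists_mem_achievableRates_le_add q hN hr (M := M)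
      (by exact_mod_cast hM0)
    calc _ ≤ β := csInf_le ⟨_, hlower⟩ hβ
      _ < _ := hβle.trans_lt (by gcongr; rwa [div_lt_iff₀ hM0, mul_comm, ← div_lt_iff₀ hε])
  · obtain ⟨β, hβ, -⟩ := exists_mem_achievableRates_le_add q hN hr (M := 1) one_pos
    exact le_csInf ⟨β, hβ⟩ hlower

/-- For the directed `N`-cycle (side information `K i = {i+1}` in `Fin N`)
with `N ≥ 3`, the optimal locality–rate trade-off among vector linear index codes over `F_q`
is `β*_{G,q}(r) = max { N(N−1−r)/(N−2), N−1 }` for all `r ≥ 1`. -/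
theorem directed_cycle_vector_linear_tradeoff
    {N : ℕ} [NeZero N] (hN : 3 ≤ N) (q : Type) [Field q] [Fintype q]
    (r : ℝ) (hr : 1 ≤ r) :
    sInf {β : ℝ | ∃ (M ℓ : ℕ) (L : Matrix (Fin N × Fin M) (Fin ℓ) q)
        (R : Fin N → Finset (Fin ℓ)),
        0 < M ∧ ValidVectorLinearCode q (fun i : Fin N => {i + 1}) L R ∧
        (∀ i, ((R i).card : ℝ) ≤ r * M) ∧ β = (ℓ : ℝ) / M}
      = max ((N : ℝ) * ((N : ℝ) - 1 - r) / ((N : ℝ) - 2)) ((N : ℝ) - 1) :=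
  directed_cycle_vector_linear_tradeoff_general hN q r hr
end

section
/- Let G be the directed 3-cycle (N = 3, K_1 = {2}, K_2 = {3}, K_3 = {1}). For any fixed finite alphabet A with |A| ≥ 2, the optimal locality–broadcast rate trade-off over all valid index codes (including non-linear codes) is β*_G(r) = max{6 − 3r, 2} for all r ≥ 1. -/
section Aux
variable {A : Type} [Fintype A]

noncomputable def aAdd (a b : A) : A :=
  (Fintype.equivFin A).symm ((Fintype.equivFin A) a + (Fintype.equivFin A) b)

noncomputable def aSub (a b : A) : A :=
  (Fintype.equivFin A).symm ((Fintype.equivFin A) a - (Fintype.equivFin A) b)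

lemma aSub_aAdd (h : 0 < Fintype.card A) (a b : A) : aSub (aAdd a b) b = a := by
  haveI : NeZero (Fintype.card A) := ⟨h.ne'⟩
  simp [aAdd, aSub]

lemma aSub_aAdd_left (h : 0 < Fintype.card A) (a b : A) : aSub (aAdd a b) a = b := by
  haveI : NeZero (Fintype.card A) := ⟨h.ne'⟩
  simp [aAdd, aSub]

def Good (A : Type) [Fintype A] (M ℓ : ℕ) (c : Fin 3 → ℕ) : Prop :=
  ∃ R : Fin 3 → Finset (Fin ℓ), IsValidCode (fun i : Fin 3 => {i + 1}) A M ℓ R ∧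
    ∀ i, (R i).card ≤ c i

/-- the locality-1, rate-3 cyclic scheme -/
lemma good_B1 (h : 0 < Fintype.card A) : Good A 1 3 (fun _ => 1) := by
  refine ⟨fun i => {i}, ⟨fun x k => aAdd (x k 0) (x (k + 1) 0), fun i => ?_⟩, fun i => by simp⟩
  refine ⟨fun q s _ => aSub (q ⟨i, Finset.mem_singleton_self i⟩)
      (s ⟨i + 1, Finset.mem_singleton_self _⟩ 0), fun x => ?_⟩
  funext m
  have h0 : m = 0 := Subsingleton.elim _ _
  subst h0
  exact aSub_aAdd h _ _

/-- the locality-4/3, rate-2 time-shared scheme, message length 3, codelength 6 -/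
lemma good_S2 (h : 0 < Fintype.card A) : Good A 3 6 (fun _ => 4) := by
  classical
  refine ⟨![{0,2,3,5}, {1,2,4,5}, {0,1,3,4}],
    ⟨fun x => ![aAdd (x 0 0) (x 1 0), aAdd (x 1 0) (x 2 0),
               aAdd (x 1 1) (x 2 1), aAdd (x 2 1) (x 0 1),
               aAdd (x 2 2) (x 0 2), aAdd (x 0 2) (x 1 2)], fun i => ?_⟩, by decide⟩
  fin_cases i
  · -- receiver 0, knows x 1, reads {0,2,3,5}
    refine ⟨fun q s => ![aSub (q ⟨0, by decide⟩) (s ⟨1, by decide⟩ 0),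
        aSub (q ⟨3, by decide⟩) (aSub (q ⟨2, by decide⟩) (s ⟨1, by decide⟩ 1)),
        aSub (q ⟨5, by decide⟩) (s ⟨1, by decide⟩ 2)], fun x => ?_⟩
    funext m
    fin_cases m <;>
      simp [aSub_aAdd h, aSub_aAdd_left h, show (5:Fin 6) = Fin.succ 4 from rfl, Matrix.cons_val_succ]
  · -- receiver 1, knows x 2, reads {1,2,4,5}
    refine ⟨fun q s => ![aSub (q ⟨1, by decide⟩) (s ⟨2, by decide⟩ 0),
        aSub (q ⟨2, by decide⟩) (s ⟨2, by decide⟩ 1),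
        aSub (q ⟨5, by decide⟩) (aSub (q ⟨4, by decide⟩) (s ⟨2, by decide⟩ 2))], fun x => ?_⟩
    funext m
    fin_cases m <;>
      simp [aSub_aAdd h, aSub_aAdd_left h, show (5:Fin 6) = Fin.succ 4 from rfl, Matrix.cons_val_succ]
  · -- receiver 2, knows x 0, reads {0,1,3,4}
    refine ⟨fun q s => ![aSub (q ⟨1, by decide⟩) (aSub (q ⟨0, by decide⟩) (s ⟨0, by decide⟩ 0)),
        aSub (q ⟨3, by decide⟩) (s ⟨0, by decide⟩ 1),
        aSub (q ⟨4, by decide⟩) (s ⟨0, by decide⟩ 2)], fun x => ?_⟩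
    funext m
    fin_cases m <;>
      simp [aSub_aAdd h, aSub_aAdd_left h, show (5:Fin 6) = Fin.succ 4 from rfl, Matrix.cons_val_succ]


lemma good_add {M₁ ℓ₁ M₂ ℓ₂ : ℕ} {c₁ c₂ : Fin 3 → ℕ}
    (h₁ : Good A M₁ ℓ₁ c₁) (h₂ : Good A M₂ ℓ₂ c₂) :
    Good A (M₁ + M₂) (ℓ₁ + ℓ₂) (fun i => c₁ i + c₂ i) := by
  obtain ⟨R₁, ⟨E₁, hD₁⟩, hc₁⟩ := h₁
  obtain ⟨R₂, ⟨E₂, hD₂⟩, hc₂⟩ := h₂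
  refine ⟨fun i => (R₁ i).map (Fin.castAddEmb ℓ₂) ∪ (R₂ i).map (Fin.natAddEmb ℓ₁), ?_, ?_⟩
  · refine ⟨fun x => Fin.addCases (fun k => E₁ (fun i m => x i (Fin.castAdd M₂ m)) k)
      (fun k => E₂ (fun i m => x i (Fin.natAdd M₁ m)) k), fun i => ?_⟩
    obtain ⟨D₁, hd₁⟩ := hD₁ i
    obtain ⟨D₂, hd₂⟩ := hD₂ i
    refine ⟨fun q s => fun m => Fin.addCases
      (fun m₁ => D₁ (fun k => q ⟨Fin.castAdd ℓ₂ k.1,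
          Finset.mem_union_left _ (Finset.mem_map_of_mem _ k.2)⟩)
        (fun j => fun mm => s j (Fin.castAdd M₂ mm)) m₁)
      (fun m₂ => D₂ (fun k => q ⟨Fin.natAdd ℓ₁ k.1,
          Finset.mem_union_right _ (Finset.mem_map_of_mem _ k.2)⟩)
        (fun j => fun mm => s j (Fin.natAdd M₁ mm)) m₂) m, fun x => ?_⟩
    funext m
    refine Fin.addCases (fun m₁ => ?_) (fun m₂ => ?_) m
    · have := congrFun (hd₁ (fun i m => x i (Fin.castAdd M₂ m))) m₁
      simpa [Fin.addCases_left] using this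
    · have := congrFun (hd₂ (fun i m => x i (Fin.natAdd M₁ m))) m₂
      simpa [Fin.addCases_right] using this
  · intro i
    calc _ ≤ ((R₁ i).map (Fin.castAddEmb ℓ₂)).card + ((R₂ i).map (Fin.natAddEmb ℓ₁)).card :=
          Finset.card_union_le _ _
      _ ≤ c₁ i + c₂ i := by simp only [Finset.card_map]; exact Nat.add_le_add (hc₁ i) (hc₂ i)


lemma good_zero : Good A 0 0 (fun _ => 0) := by
  refine ⟨fun _ => ∅, ⟨fun _ => Fin.elim0, fun i => ⟨fun _ _ m => m.elim0, fun x => ?_⟩⟩,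
    fun i => le_rfl⟩
  funext m; exact m.elim0

lemma good_rep {M ℓ : ℕ} {c : Fin 3 → ℕ} (h : Good A M ℓ c) :
    ∀ n : ℕ, Good A (n * M) (n * ℓ) (fun i => n * c i) := by
  intro n
  induction n with
  | zero => simpa using (good_zero (A := A))
  | succ n ih =>
    have g := good_add h ih
    have e1 : M + n * M = (n + 1) * M := by ring
    have e2 : ℓ + n * ℓ = (n + 1) * ℓ := by ring
    have e3 : (fun i => c i + n * c i) = (fun i : Fin 3 => (n + 1) * c i) := by
      funext i; ring
    rw [e1, e2, e3] at g
    exact g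

lemma good_mix (h : 0 < Fintype.card A) {m k : ℕ} (hk : k ≤ m) :
    Good A (3 * m) (9 * m - 3 * k) (fun _ => 3 * m + k) := by
  have g := good_add (good_rep (good_S2 h) k) (good_rep (good_B1 h) (3 * (m - k)))
  have e1 : k * 3 + 3 * (m - k) * 1 = 3 * m := by omega
  have e2 : k * 6 + 3 * (m - k) * 3 = 9 * m - 3 * k := by omega
  have e3 : (fun i : Fin 3 => k * 4 + 3 * (m - k) * 1) = (fun _ : Fin 3 => 3 * m + k) := by
    funext i; omega
  rw [e1, e2, e3] at g
  exact g


/-- Key converse counting bound: for each `i`, the coordinates read by receivers `i` and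
`i+2` together must number at least `2M`. -/
lemma converse_union (hA : 2 ≤ Fintype.card A) {M ℓ : ℕ}
    {R : Fin 3 → Finset (Fin ℓ)}
    (h : IsValidCode (fun i : Fin 3 => {i + 1}) A M ℓ R) (i : Fin 3) :
    2 * M ≤ (R i ∪ R (i + 2)).card := by
  classical
  have hne : Nonempty A := Fintype.card_pos_iff.mp (by omega)
  obtain ⟨a₀⟩ := hne
  obtain ⟨E, hE⟩ := h
  obtain ⟨D₁, hD₁⟩ := hE i
  obtain ⟨D₂, hD₂⟩ := hE (i + 2)
  -- facts about Fin 3 arithmetic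
  have f1 : i + 1 ≠ i := by fin_cases i <;> decide
  have f2 : i + 1 ≠ i + 2 := by fin_cases i <;> decide
  have f3 : i + 2 + 1 = i := by fin_cases i <;> decide
  have f4 : i + 2 ≠ i := by fin_cases i <;> decide
  set X : (Fin M → A) → (Fin M → A) → (Fin 3 → Fin M → A) :=
    fun u v j => if j = i then u else if j = i + 2 then v else fun _ => a₀ with hX
  have hXi : ∀ u v, X u v i = u := by intro u v; simp [hX]
  have hXi2 : ∀ u v, X u v (i + 2) = v := by intro u v; simp [hX, f4]
  have hXi1 : ∀ u v, X u v (i + 1) = fun _ => a₀ := by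
    intro u v; simp [hX, f1, f2]
  set φ : ((Fin M → A) × (Fin M → A)) → ({k : Fin ℓ // k ∈ R i ∪ R (i + 2)} → A) :=
    fun p k => E (X p.1 p.2) k.1 with hφ
  have hinj : Function.Injective φ := by
    intro p p' hpp
    have hq1 : (fun k : {k : Fin ℓ // k ∈ R i} => E (X p.1 p.2) k.1) =
        (fun k : {k : Fin ℓ // k ∈ R i} => E (X p'.1 p'.2) k.1) := by
      funext k
      exact congrFun hpp ⟨k.1, Finset.mem_union_left _ k.2⟩
    have hs1 : (fun j : {j : Fin 3 // j ∈ ({i + 1} : Finset (Fin 3))} => X p.1 p.2 j.1) =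
        (fun j => X p'.1 p'.2 j.1) := by
      funext j
      have : j.1 = i + 1 := Finset.mem_singleton.mp j.2
      rw [this, hXi1, hXi1]
    have h1 : p.1 = p'.1 := by
      have e1 := hD₁ (X p.1 p.2)
      have e2 := hD₁ (X p'.1 p'.2)
      rw [hXi] at e1 e2
      rw [hq1, hs1] at e1
      rw [e1] at e2
      exact e2.symm ▸ rfl
    have hq2 : (fun k : {k : Fin ℓ // k ∈ R (i + 2)} => E (X p.1 p.2) k.1) =
        (fun k : {k : Fin ℓ // k ∈ R (i + 2)} => E (X p'.1 p'.2) k.1) := by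
      funext k
      exact congrFun hpp ⟨k.1, Finset.mem_union_right _ k.2⟩
    have hs2 : (fun j : {j : Fin 3 // j ∈ ({i + 2 + 1} : Finset (Fin 3))} => X p.1 p.2 j.1) =
        (fun j => X p'.1 p'.2 j.1) := by
      funext j
      have hj : j.1 = i + 2 + 1 := Finset.mem_singleton.mp j.2
      rw [hj, f3, hXi, hXi, h1]
    have h2 : p.2 = p'.2 := by
      have e1 := hD₂ (X p.1 p.2)
      have e2 := hD₂ (X p'.1 p'.2)
      rw [hXi2] at e1 e2
      rw [hq2, hs2] at e1
      rw [e1] at e2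
      exact e2.symm ▸ rfl
    exact Prod.ext h1 h2
  have hcard := Fintype.card_le_of_injective φ hinj
  rw [Fintype.card_prod, Fintype.card_fun, Fintype.card_fun] at hcard
  simp only [Fintype.card_fin, Fintype.card_coe] at hcard
  rw [← pow_add] at hcard
  have := (Nat.pow_le_pow_iff_right (by omega : 1 < Fintype.card A)).mp hcard
  omega

/-- every valid code obeys both converse bounds -/
lemma element_lower (hA : 2 ≤ Fintype.card A) {r : ℝ} {M ℓ : ℕ}
    {R : Fin 3 → Finset (Fin ℓ)} (hM : 0 < M)
    (h : IsValidCode (fun i : Fin 3 => {i + 1}) A M ℓ R)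
    (hloc : ∀ i, ((R i).card : ℝ) ≤ r * M) :
    max (6 - 3 * r) 2 ≤ (ℓ : ℝ) / M := by
  classical
  have hMR : (0 : ℝ) < M := by exact_mod_cast hM
  -- the three union bounds
  have h0 := converse_union hA h 0
  have h1 := converse_union hA h 1
  have h2 := converse_union hA h 2
  -- rewrite unions via sdiff
  have u0 : (R 0 ∪ R (0 + 2)).card = (R 2 \ R 0).card + (R 0).card := by
    rw [show ((0 : Fin 3) + 2) = 2 from rfl, Finset.union_comm, ← Finset.card_sdiff_add_card]
  have u1 : (R 1 ∪ R (1 + 2)).card = (R 0 \ R 1).card + (R 1).card := by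
    rw [show ((1 : Fin 3) + 2) = 0 from rfl, Finset.union_comm, ← Finset.card_sdiff_add_card]
  have u2 : (R 2 ∪ R (2 + 2)).card = (R 1 \ R 2).card + (R 2).card := by
    rw [show ((2 : Fin 3) + 2) = 1 from rfl, Finset.union_comm, ← Finset.card_sdiff_add_card]
  -- the three difference sets are pairwise disjoint inside Fin ℓ
  have hdisj : (R 2 \ R 0).card + (R 0 \ R 1).card + (R 1 \ R 2).card ≤ ℓ := by
    have d01 : Disjoint (R 2 \ R 0) (R 0 \ R 1) := by
      rw [Finset.disjoint_left]
      intro a ha hb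
      exact (Finset.mem_sdiff.mp ha).2 (Finset.mem_sdiff.mp hb).1
    have d012 : Disjoint ((R 2 \ R 0) ∪ (R 0 \ R 1)) (R 1 \ R 2) := by
      rw [Finset.disjoint_left]
      intro a ha hb
      rcases Finset.mem_union.mp ha with h | h
      · exact (Finset.mem_sdiff.mp hb).2 (Finset.mem_sdiff.mp h).1
      · exact (Finset.mem_sdiff.mp h).2 (Finset.mem_sdiff.mp hb).1
    calc (R 2 \ R 0).card + (R 0 \ R 1).card + (R 1 \ R 2).card
        = (((R 2 \ R 0) ∪ (R 0 \ R 1)) ∪ (R 1 \ R 2)).card := by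
          rw [Finset.card_union_of_disjoint d012, Finset.card_union_of_disjoint d01]
      _ ≤ (Finset.univ : Finset (Fin ℓ)).card := Finset.card_le_univ _
      _ = ℓ := by simp
  -- bound 1 : 2 ≤ ℓ / M
  have b2 : (2 : ℝ) ≤ (ℓ : ℝ) / M := by
    rw [le_div_iff₀ hMR]
    have : 2 * M ≤ ℓ := by
      calc 2 * M ≤ (R 0 ∪ R (0 + 2)).card := h0
        _ ≤ (Finset.univ : Finset (Fin ℓ)).card := Finset.card_le_univ _
        _ = ℓ := by simp
    exact_mod_cast this
  -- bound 2 : 6 - 3r ≤ ℓ / M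
  have b6 : 6 - 3 * r ≤ (ℓ : ℝ) / M := by
    rw [sub_le_iff_le_add, div_add' _ _ _ hMR.ne', le_div_iff₀ hMR]
    -- suffices : 6 M ≤ ℓ + 3 r M
    have hnat : 6 * M ≤ ((R 0).card + (R 1).card + (R 2).card) + ℓ := by
      omega
    have hq : (6 : ℝ) * M ≤ (((R 0).card + (R 1).card + (R 2).card : ℕ) : ℝ) + ℓ := by
      exact_mod_cast hnat
    have hloc3 : (((R 0).card + (R 1).card + (R 2).card : ℕ) : ℝ) ≤ 3 * (r * M) := by
      push_cast
      have := hloc 0; have := hloc 1; have := hloc 2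
      linarith [hloc 0, hloc 1, hloc 2]
    nlinarith
  exact max_le b6 b2

end Aux

/-- For the directed 3-cycle (`K 0 = {1}`, `K 1 = {2}`, `K 2 = {0}`) and any
fixed finite alphabet `A` with `|A| ≥ 2`, the optimal locality–broadcast rate trade-off over
all valid index codes (including non-linear ones) is `β*_G(r) = max {6 − 3r, 2}` for `r ≥ 1`. -/
theorem directed_three_cycle_tradeoff
    (A : Type) [Fintype A] (hA : 2 ≤ Fintype.card A) (r : ℝ) (hr : 1 ≤ r) :
    sInf {β : ℝ | ∃ (M ℓ : ℕ) (R : Fin 3 → Finset (Fin ℓ)),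
        0 < M ∧ IsValidCode (fun i : Fin 3 => {i + 1}) A M ℓ R ∧
        (∀ i, ((R i).card : ℝ) ≤ r * M) ∧ β = (ℓ : ℝ) / M}
      = max (6 - 3 * r) 2 := by
  classical
  have hApos : 0 < Fintype.card A := by omega
  set S : Set ℝ := {β : ℝ | ∃ (M ℓ : ℕ) (R : Fin 3 → Finset (Fin ℓ)),
        0 < M ∧ IsValidCode (fun i : Fin 3 => {i + 1}) A M ℓ R ∧
        (∀ i, ((R i).card : ℝ) ≤ r * M) ∧ β = (ℓ : ℝ) / M} with hS
  -- membership of the mixed codes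
  have hmem : ∀ m : ℕ, 0 < m →
      ((9 * m - 3 * min m ⌊3 * (m : ℝ) * (r - 1)⌋₊ : ℕ) : ℝ) / ((3 * m : ℕ) : ℝ) ∈ S := by
    intro m hm
    set k := min m ⌊3 * (m : ℝ) * (r - 1)⌋₊ with hk
    obtain ⟨R, hvalid, hcard⟩ := good_mix (A := A) hApos (min_le_left m _)
    refine ⟨3 * m, 9 * m - 3 * k, R, by omega, hvalid, fun i => ?_, rfl⟩
    -- locality : 3m + k ≤ r * (3m)
    have hflk : k ≤ ⌊3 * (m : ℝ) * (r - 1)⌋₊ := min_le_right _ _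
    have hkr : (k : ℝ) ≤ 3 * (m : ℝ) * (r - 1) :=
      le_trans (by exact_mod_cast hflk)
        (Nat.floor_le (mul_nonneg (by positivity) (by linarith)))
    have h1 : (R i).card ≤ 3 * m + k := hcard i
    calc ((R i).card : ℝ) ≤ ((3 * m + k : ℕ) : ℝ) := by exact_mod_cast h1
      _ ≤ r * ((3 * m : ℕ) : ℝ) := by push_cast; nlinarith
  have hlb : ∀ b ∈ S, max (6 - 3 * r) 2 ≤ b := by
    rintro b ⟨M, ℓ, R, hM, hvalid, hloc, rfl⟩
    exact element_lower hA hM hvalid hloc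
  have hbdd : BddBelow S := ⟨max (6 - 3 * r) 2, hlb⟩
  have hne : S.Nonempty := ⟨_, hmem 1 one_pos⟩
  refine le_antisymm ?_ (le_csInf hne hlb)
  -- upper bound : sInf S ≤ max + ε for all ε > 0
  refine le_of_forall_pos_le_add ?_
  intro ε hε
  obtain ⟨m, hm⟩ := exists_nat_gt (1 / ε)
  have hm0 : 0 < m := by
    by_contra hc
    push_neg at hc
    interval_cases m
    · simp at hm; linarith [one_div_pos.mpr hε, hm]
  have hmR : (0 : ℝ) < m := by exact_mod_cast hm0
  have hεm : 1 / (m : ℝ) < ε := by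
    rw [div_lt_iff₀ hmR]
    rw [div_lt_iff₀ hε] at hm
    linarith
  refine le_trans (csInf_le hbdd (hmem m hm0)) ?_
  -- now show the value is ≤ max + ε
  set k := min m ⌊3 * (m : ℝ) * (r - 1)⌋₊ with hk
  have hkm : k ≤ m := min_le_left _ _
  have hcast : ((9 * m - 3 * k : ℕ) : ℝ) = 9 * (m : ℝ) - 3 * k := by
    have : 3 * k ≤ 9 * m := by omega
    push_cast [Nat.cast_sub this]
    ring
  rw [hcast]
  push_cast
  rcases le_or_gt m ⌊3 * (m : ℝ) * (r - 1)⌋₊ with hcase | hcase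
  · -- k = m, value is 2
    have hkm' : k = m := by omega
    have : (9 * (m : ℝ) - 3 * k) / (3 * m) = 2 := by
      rw [hkm']; field_simp; ring
    rw [this]
    have : (2 : ℝ) ≤ max (6 - 3 * r) 2 := le_max_right _ _
    linarith
  · -- k = floor, value ≤ 6 - 3r + 1/m
    have hkf : k = ⌊3 * (m : ℝ) * (r - 1)⌋₊ := by omega
    have hfl : 3 * (m : ℝ) * (r - 1) < k + 1 := by
      rw [hkf]; exact Nat.lt_floor_add_one _
    have hval : (9 * (m : ℝ) - 3 * k) / (3 * m) ≤ 6 - 3 * r + 1 / m := by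
      rw [div_le_iff₀ (by positivity)]
      have h1m : (1 : ℝ) / m * (3 * m) = 3 := by field_simp
      nlinarith
    have : (6 : ℝ) - 3 * r ≤ max (6 - 3 * r) 2 := le_max_left _ _
    linarith
end

section
/- Let G be a single unicast index coding problem on N receivers with minrk_q(G) = N−1, and suppose the shortest directed cycle in G has length N_c ≥ 3. Then: (a) every valid scalar linear index code for G over F_q with codelength N−1 satisfies max_i |R_i| ≥ 2 and (1/N)·∑_{i∈[N]} |R_i| ≥ (N + N_c − 2)/N; and (b) there exists a valid scalar linear index code for G over F_q with codelength N−1 satisfying max_i |R_i| = 2 and ∑_{i∈[N]} |R_i| = N + N_c − 2. Hence the optimal overall locality at rate N−1 is 2 and the optimal average locality is (N + N_c − 2)/N. -/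
/-- A valid scalar linear index code for the problem with side information sets `K`:
encoder matrix `L : F_q^{N×ℓ}`, query sets `R`; receiver `i` can decode `x i` iff there is
`u` supported on `K i` with `u + e_i ∈ span(L_k : k ∈ R i)`. -/
def ValidScalarCode {N ℓ : ℕ} (q : Type) [Field q]
    (K : Fin N → Finset (Fin N))
    (L : Matrix (Fin N) (Fin ℓ) q)
    (R : Fin N → Finset (Fin ℓ)) : Prop :=
  ∀ i : Fin N,
    ∃ u : Fin N → q,
      (∀ j, u j ≠ 0 → j ∈ K i) ∧
      u + Pi.single i 1 ∈ Submodule.span q ((fun k (j : Fin N) => L j k) '' (R i : Set (Fin ℓ)))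

/-- The minrank of the side information graph over `F_q`: the minimum rank of a matrix
fitting the graph (all diagonal entries `1`, and `A j i = 0` whenever `j ≠ i` and `j ∉ K i`). -/
noncomputable def minrk (q : Type) [Field q] {N : ℕ} (K : Fin N → Finset (Fin N)) : ℕ :=
  sInf {n : ℕ | ∃ A : Matrix (Fin N) (Fin N) q,
    (∀ i, A i i = 1) ∧ (∀ i j, j ≠ i → j ∉ K i → A j i = 0) ∧ A.rank = n}

/-- The directed graph given by `K` has a directed cycle of length `n` whose vertices lie in
`S`: an injective `c : ZMod n → Fin N` with an edge from `c t` to `c (t+1)` for every `t`. -/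
def HasCycleIn {N : ℕ} (K : Fin N → Finset (Fin N)) (S : Finset (Fin N)) (n : ℕ) : Prop :=
  ∃ c : ZMod n → Fin N, (∀ t, c t ∈ S) ∧ Function.Injective c ∧ ∀ t, c (t + 1) ∈ K (c t)

/-!
Write the decoding vector of receiver `i` as `L W_i` with `W_i` supported on `R_i`. Then `L Wᵀ`
fits `G`, so `rank W ≥ minrk = N - 1`. The `N` rows `W_i` live in dimension `N - 1`, so they
satisfy a relation `∑ z_i W_i = 0`; row `i` of `L Wᵀ z = 0` shows that every vertex of the
support `Z` of `z` has an in-neighbour in `Z`, so `Z` carries a cycle and `|Z| ≥ N_c`. The rows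
`W_i`, `i ∈ Z`, still span at least `|Z| - 1` dimensions, and each coordinate one of them uses is
used by at least two of them (otherwise the relation fails there), so
`∑_{i ∈ Z} |R_i| ≥ 2(|Z| - 1)`, while every other receiver queries at least one symbol.

For the code, take a cycle `c_0, …, c_{N_c - 1}` and send `x_{c_s} - x_{c_0}` for `s ≠ 0` and `x_j`
for `j` off the cycle. Receiver `c_s` decodes from `x_{c_s} - x_{c_{s+1}}`, which costs two symbols,
except for `c_0` and `c_{N_c - 1}`, where one of the two differences is zero.
-/

open Function Module Submodule Finset Matrix

theorem finrank_span_range_le_finrank_span_image_add_card_compl {ι F V : Type*} [Fintype ι]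
    [Field F] [AddCommGroup V] [Module F V] [FiniteDimensional F V] (W : ι → V)
    (s : Finset ι) [DecidableEq ι] :
    finrank F (span F (Set.range W)) ≤ finrank F (span F (W '' s)) + #sᶜ := by
  classical
  have hsplit : Set.range W = W '' s ∪ W '' ↑sᶜ := by
    rw [← Set.image_union, coe_compl, Set.union_compl_self, Set.image_univ]
  rw [hsplit, span_union]
  refine (finrank_add_le_finrank_add_finrank _ _).trans (Nat.add_le_add_left ?_ _)
  rw [← coe_image]
  exact (finrank_span_finset_le_card _).trans card_image_le

/-- Every coordinate used by some `W i` is used by at least two of them, since the relation must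
cancel it; and the coordinates used bound the rank. -/
theorem two_mul_finrank_span_le_sum_card_support {ι κ F : Type*} [Fintype κ] [DecidableEq κ]
    [Field F] [DecidableEq F] (W : ι → κ → F) {z : ι → F} {s : Finset ι}
    (hz : ∀ i ∈ s, z i ≠ 0) (hrel : ∑ i ∈ s, z i • W i = 0) :
    2 * finrank F (span F (W '' s)) ≤ ∑ i ∈ s, #{k | W i k ≠ 0} := by
  set T := s.biUnion fun i => ({k | W i k ≠ 0} : Finset κ)
  have hspan :
      span F (W '' s) ≤ span F (T.image fun k => (Pi.single k 1 : κ → F) : Set (κ → F)) := by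
    rw [span_le]
    rintro _ ⟨i, hi, rfl⟩
    rw [← univ_sum_single (W i), ← sum_subset (subset_univ T)]
    · refine sum_mem fun k hk => ?_
      rw [← mul_one (W i k), ← smul_eq_mul, Pi.single_smul']
      exact smul_mem _ _ (subset_span (mem_image_of_mem _ hk))
    · intro k _ hk
      rw [show W i k = 0 from by_contra fun h => hk (mem_biUnion.mpr ⟨i, hi, by simpa using h⟩),
        Pi.single_zero]
  have hrank : finrank F (span F (W '' s)) ≤ #T :=
    (finrank_mono hspan).trans ((finrank_span_finset_le_card _).trans card_image_le)
  have htwo : ∀ k ∈ T, 2 ≤ #{i ∈ s | W i k ≠ 0} := by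
    intro k hk
    obtain ⟨i, hi, hik⟩ := mem_biUnion.mp hk
    rw [mem_filter_univ] at hik
    by_contra! hlt
    have honly : ∀ j ∈ s, W j k ≠ 0 → j = i := fun j hj hjk =>
      card_le_one.mp (Nat.le_of_lt_succ hlt) j (mem_filter.mpr ⟨hj, hjk⟩) i
        (mem_filter.mpr ⟨hi, hik⟩)
    have hcoord := congrFun hrel k
    simp only [Finset.sum_apply, Pi.smul_apply, smul_eq_mul, Pi.zero_apply] at hcoord
    rw [sum_eq_single_of_mem i hi fun j hj hji => ?_] at hcoord
    · exact mul_ne_zero (hz i hi) hik hcoord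
    · rw [show W j k = 0 from by_contra fun h => hji (honly j hj h), mul_zero]
  calc 2 * finrank F (span F (W '' s)) ≤ ∑ _k ∈ T, 2 := by
        rw [sum_const, smul_eq_mul]; omega
    _ ≤ ∑ k ∈ T, #{i ∈ s | W i k ≠ 0} := sum_le_sum htwo
    _ = ∑ i ∈ s, #{k ∈ T | W i k ≠ 0} :=
        sum_card_bipartiteAbove_eq_sum_card_bipartiteBelow (fun k i => W i k ≠ 0)
    _ ≤ ∑ i ∈ s, #{k | W i k ≠ 0} := sum_le_sum fun i _ => card_le_card (by
        intro k; simp +contextual)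

theorem Function.exists_mem_periodicPts {α : Type*} [Finite α] [Nonempty α] (f : α → α) :
    ∃ x, x ∈ periodicPts f := by
  obtain ⟨x⟩ := ‹Nonempty α›
  obtain ⟨m, n, hne, heq⟩ := Finite.exists_ne_map_eq_of_infinite (f^[·] x)
  rcases lt_or_gt_of_ne hne with hlt | hlt
  · refine ⟨f^[m] x, mk_mem_periodicPts (n := n - m) (by omega) ?_⟩
    rw [IsPeriodicPt, IsFixedPt, ← iterate_add_apply, Nat.sub_add_cancel hlt.le, heq]
  · refine ⟨f^[n] x, mk_mem_periodicPts (n := m - n) (by omega) ?_⟩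
    rw [IsPeriodicPt, IsFixedPt, ← iterate_add_apply, Nat.sub_add_cancel hlt.le, heq]

section Cycles

variable {N : ℕ} {K : Fin N → Finset (Fin N)}

theorem HasCycleIn.le_card {S : Finset (Fin N)} {n : ℕ} (h : HasCycleIn K S n) : n ≤ #S := by
  obtain ⟨c, hcS, hc, -⟩ := h
  rcases Nat.eq_zero_or_pos n with rfl | hn
  · exact Nat.zero_le _
  have : NeZero n := ⟨hn.ne'⟩
  simpa using Fintype.card_le_of_injective (fun t => (⟨c t, hcS t⟩ : S))
    fun s t hst => hc (congrArg Subtype.val hst)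

theorem HasCycleIn.mono {S T : Finset (Fin N)} {n : ℕ} (h : HasCycleIn K S n) (hST : S ⊆ T) :
    HasCycleIn K T n :=
  let ⟨c, hcS, hc, hedge⟩ := h
  ⟨c, fun t => hST (hcS t), hc, hedge⟩

/-- The cycle runs backwards along the orbit of `w`. -/
theorem hasCycleIn_minimalPeriod {S : Finset (Fin N)} (g : S → S)
    (hg : ∀ x, (x : Fin N) ∈ K (g x)) {w : S} (hw : w ∈ periodicPts g) :
    HasCycleIn K S (minimalPeriod g w) := by
  set p := minimalPeriod g w
  have : NeZero p := ⟨(minimalPeriod_pos_of_mem_periodicPts hw).ne'⟩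
  refine ⟨fun t => g^[(-t).val] w, fun t => (g^[(-t).val] w).2, fun s t hst => ?_, fun t => ?_⟩
  · have := (iterate_eq_iterate_iff_of_lt_minimalPeriod (ZMod.val_lt _) (ZMod.val_lt _)).mp
      (Subtype.val_injective hst)
    exact neg_injective (ZMod.val_injective _ this)
  · have hstep : g (g^[(-(t + 1)).val] w) = g^[(-t).val] w := by
      rw [← iterate_succ_apply' g, ← iterate_mod_minimalPeriod_eq]
      congr 1
      rw [← ZMod.val_natCast, Nat.cast_succ, ZMod.natCast_zmod_val]
      ring_nf
    have := hg (g^[(-(t + 1)).val] w)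
    rwa [hstep] at this

theorem exists_hasCycleIn_of_forall_exists_pred {S : Finset (Fin N)} (hS : S.Nonempty)
    (h : ∀ i ∈ S, ∃ j ∈ S, i ∈ K j) : ∃ p, 0 < p ∧ HasCycleIn K S p := by
  choose g hgS hg using h
  have : Nonempty S := hS.to_subtype
  obtain ⟨w, hw⟩ := exists_mem_periodicPts fun x : S => (⟨g x x.2, hgS x x.2⟩ : S)
  exact ⟨_, minimalPeriod_pos_of_mem_periodicPts hw,
    hasCycleIn_minimalPeriod _ (fun x => hg x x.2) hw⟩

end Cycles

structure FitsGraph {N : ℕ} {α : Type*} [Semiring α] (K : Fin N → Finset (Fin N))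
    (A : Matrix (Fin N) (Fin N) α) : Prop where
  diag_eq_one : ∀ i, A i i = 1
  apply_eq_zero : ∀ i j, j ≠ i → j ∉ K i → A j i = 0

theorem minrk_le_rank {N : ℕ} {q : Type} [Field q] {K : Fin N → Finset (Fin N)}
    {A : Matrix (Fin N) (Fin N) q} (hA : FitsGraph K A) : minrk q K ≤ A.rank :=
  Nat.sInf_le ⟨A, hA.diag_eq_one, hA.apply_eq_zero, rfl⟩

theorem FitsGraph.exists_pred_of_mulVec_eq_zero {N : ℕ} {α : Type*} [Semiring α]
    {K : Fin N → Finset (Fin N)} {A : Matrix (Fin N) (Fin N) α} (hA : FitsGraph K A)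
    {z : Fin N → α} (hz : A *ᵥ z = 0) {i : Fin N} (hi : z i ≠ 0) : ∃ j, z j ≠ 0 ∧ i ∈ K j := by
  by_contra! hpred
  have hrow : (A *ᵥ z) i = z i := by
    rw [mulVec, dotProduct, sum_eq_single i, hA.diag_eq_one, one_mul]
    · intro j _ hji
      by_cases hzj : z j = 0
      · rw [hzj, mul_zero]
      · rw [hA.apply_eq_zero j i (Ne.symm hji) (hpred j hzj), zero_mul]
    · exact fun h => absurd (mem_univ i) h
  exact hi (hrow.symm.trans (congrFun hz i))

section LowerBound

variable {N ℓ : ℕ} {q : Type} [Field q] {K : Fin N → Finset (Fin N)}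

theorem ValidScalarCode.nonempty (hK : ∀ i, i ∉ K i) {L : Matrix (Fin N) (Fin ℓ) q}
    {R : Fin N → Finset (Fin ℓ)} (h : ValidScalarCode q K L R) (i : Fin N) : (R i).Nonempty := by
  obtain ⟨u, hu, hmem⟩ := h i
  rw [nonempty_iff_ne_empty]
  rintro hRi
  rw [hRi, coe_empty, Set.image_empty, span_empty, mem_bot] at hmem
  have hi : u i + 1 = 0 := by simpa using congrFun hmem i
  exact hK i (hu i fun h0 => by simp [h0] at hi)

theorem ValidScalarCode.exists_fitsGraph (hK : ∀ i, i ∉ K i) {L : Matrix (Fin N) (Fin ℓ) q}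
    {R : Fin N → Finset (Fin ℓ)} (h : ValidScalarCode q K L R) :
    ∃ W : Matrix (Fin N) (Fin ℓ) q, (∀ i k, W i k ≠ 0 → k ∈ R i) ∧ FitsGraph K (L * Wᵀ) := by
  choose u hu hspan using h
  choose l hl hlu using fun i => (Finsupp.mem_span_image_iff_linearCombination q).mp (hspan i)
  let W : Matrix (Fin N) (Fin ℓ) q := Matrix.of fun i k => l i k
  have hcol : ∀ i j, (L * Wᵀ) j i = u i j + (Pi.single i 1 : Fin N → q) j := by
    intro i j
    rw [← Pi.add_apply, ← hlu i, Finsupp.linearCombination_apply,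
      Finsupp.sum_fintype _ _ (by simp), Finset.sum_apply, mul_apply]
    simp [W, mul_comm]
  have hu_self : ∀ i, u i i = 0 := fun i => by_contra fun h => hK i (hu i i h)
  refine ⟨W, fun i k hk => hl i (Finsupp.mem_support_iff.mpr hk),
    ⟨fun i => ?_, fun i j hji hj => ?_⟩⟩
  · simp [hcol, hu_self]
  · rw [hcol, Pi.single_eq_of_ne hji, add_zero]
    exact by_contra fun h => hj (hu i j h)

theorem ValidScalarCode.exists_cycle_two_mul_le_sum_card (hK : ∀ i, i ∉ K i) (hℓN : ℓ < N)
    (hℓ : ℓ ≤ minrk q K) {L : Matrix (Fin N) (Fin ℓ) q} {R : Fin N → Finset (Fin ℓ)}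
    (h : ValidScalarCode q K L R) :
    ∃ Z : Finset (Fin N), (∃ p, 0 < p ∧ HasCycleIn K Z p) ∧ 2 * (#Z + ℓ - N) ≤ ∑ i ∈ Z, #(R i) := by
  classical
  obtain ⟨W, hWR, hfit⟩ := h.exists_fitsGraph hK
  obtain ⟨z, hrel, i₀, hi₀⟩ : ∃ z : Fin N → q, ∑ i, z i • W i = 0 ∧ ∃ i, z i ≠ 0 :=
    Fintype.not_linearIndependent_iff.mp fun hli => by
      have := hli.fintype_card_le_finrank
      simp only [Fintype.card_fin, finrank_fin_fun] at this
      omega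
  set Z : Finset (Fin N) := {i | z i ≠ 0}
  have hker : (L * Wᵀ) *ᵥ z = 0 := by
    rw [← mulVec_mulVec, mulVec_transpose, vecMul_eq_sum, hrel, mulVec_zero]
  have hcycle : ∃ p, 0 < p ∧ HasCycleIn K Z p :=
    exists_hasCycleIn_of_forall_exists_pred ⟨i₀, by simpa [Z]⟩ fun i hi => by
      obtain ⟨j, hj, hij⟩ := hfit.exists_pred_of_mulVec_eq_zero hker (by simpa [Z] using hi)
      exact ⟨j, by simpa [Z], hij⟩
  have hrankW : ℓ ≤ finrank q (span q (Set.range W)) :=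
    calc ℓ ≤ minrk q K := hℓ
      _ ≤ (L * Wᵀ).rank := minrk_le_rank hfit
      _ ≤ W.rank := (rank_mul_le_right _ _).trans (rank_transpose W).le
      _ = _ := rank_eq_finrank_span_row W
  have hrelZ : ∑ i ∈ Z, z i • W i = 0 := by
    rw [← hrel]
    refine sum_subset (subset_univ _) fun i _ hi => ?_
    rw [show z i = 0 by simpa [Z] using hi, zero_smul]
  have hsupp : ∑ i ∈ Z, #{k | W i k ≠ 0} ≤ ∑ i ∈ Z, #(R i) :=
    sum_le_sum fun i _ => card_le_card fun k hk => hWR i k (by simpa using hk)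
  have hsplit := finrank_span_range_le_finrank_span_image_add_card_compl (F := q) W Z
  have htwo := two_mul_finrank_span_le_sum_card_support W (fun i hi => by simpa [Z] using hi) hrelZ
  have hZN : #Z ≤ N := by simpa using card_le_univ Z
  rw [card_compl, Fintype.card_fin] at hsplit
  exact ⟨Z, hcycle, by omega⟩

theorem ValidScalarCode.locality_lower_bound {Nc : ℕ} (hK : ∀ i, i ∉ K i)
    (hminrk : minrk q K = N - 1) (hN : 0 < N) (hNc : 3 ≤ Nc)
    (hshortest : ∀ n, 0 < n → n < Nc → ¬ HasCycleIn K univ n)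
    {L : Matrix (Fin N) (Fin (N - 1)) q} {R : Fin N → Finset (Fin (N - 1))}
    (h : ValidScalarCode q K L R) : (∃ i, 2 ≤ #(R i)) ∧ N + Nc - 2 ≤ ∑ i, #(R i) := by
  obtain ⟨Z, ⟨p, hp, hZcyc⟩, hZsum⟩ :=
    h.exists_cycle_two_mul_le_sum_card hK (by omega) hminrk.ge
  have hNcp : Nc ≤ p := not_lt.mp fun hlt => hshortest p hp hlt (hZcyc.mono (subset_univ Z))
  have hZ : Nc ≤ #Z := hNcp.trans hZcyc.le_card
  have hZN : #Z ≤ N := by simpa using card_le_univ Z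
  have hZc : #Zᶜ ≤ ∑ i ∈ Zᶜ, #(R i) :=
    (card_eq_sum_ones _).trans_le (sum_le_sum fun i _ => (h.nonempty hK i).card_pos)
  rw [card_compl, Fintype.card_fin] at hZc
  refine ⟨?_, ?_⟩
  · by_contra! hle
    have : ∑ i ∈ Z, #(R i) ≤ #Z := by
      simpa using sum_le_sum fun i (_ : i ∈ Z) => Nat.le_of_lt_succ (hle i)
    omega
  · rw [← sum_add_sum_compl Z]
    omega

end LowerBound

theorem validScalarCode_of_columns {N ℓ : ℕ} {q : Type} [Field q] {K : Fin N → Finset (Fin N)}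
    {ι : Type*} (e : Fin ℓ ≃ ι) (col : ι → Fin N → q) (Q : Fin N → Finset ι)
    (h : ∀ i, ∃ u : Fin N → q, (∀ j, u j ≠ 0 → j ∈ K i) ∧ u + Pi.single i 1 ∈ span q (col '' Q i)) :
    ValidScalarCode q K (Matrix.of fun j k => col (e k) j)
      (fun i => (Q i).map e.symm.toEmbedding) := by
  intro i
  obtain ⟨u, hu, hmem⟩ := h i
  refine ⟨u, hu, ?_⟩
  convert hmem using 3
  rw [coe_map, Set.image_image]
  congr 1
  funext k j
  simp

section StarCode

variable {N : ℕ} (q : Type*) [Ring q] (C : Finset (Fin N)) (a : Fin N)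

/-- The hub `a ∈ C` gets the zero column, which is dropped from the code. -/
def starColumn (j : Fin N) : Fin N → q :=
  Pi.single j 1 - if j ∈ C then Pi.single a 1 else 0

variable {q C a}

theorem starColumn_of_notMem {j : Fin N} (hj : j ∉ C) : starColumn q C a j = Pi.single j 1 := by
  simp [starColumn, hj]

theorem starColumn_sub_starColumn {i j : Fin N} (hi : i ∈ C) (hj : j ∈ C) :
    starColumn q C a i - starColumn q C a j = Pi.single i 1 - Pi.single j 1 := by
  simp [starColumn, hi, hj]

theorem starColumn_mem_span (ha : a ∈ C) {S : Finset (Fin N)} {j : Fin N} (hj : j ∈ S) :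
    starColumn q C a j ∈
      span q ((fun x : {x // x ≠ a} => starColumn q C a x) '' (S.subtype (· ≠ a))) := by
  by_cases hja : j = a
  · subst hja
    simp [starColumn, ha]
  · exact subset_span ⟨⟨j, hja⟩, by simpa using hj, rfl⟩

end StarCode

section CycleQuery

variable {N n : ℕ} {c : ZMod n → Fin N}

open Classical in
noncomputable def cycleQuery (c : ZMod n → Fin N) (i : Fin N) : Finset (Fin N) :=
  if h : ∃ s, c s = i then {i, c (h.choose + 1)} else {i}

theorem cycleQuery_apply (hc : Injective c) (s : ZMod n) :
    cycleQuery c (c s) = {c s, c (s + 1)} := by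
  have h : ∃ t, c t = c s := ⟨s, rfl⟩
  rw [cycleQuery, dif_pos h, hc h.choose_spec]

theorem cycleQuery_of_notMem {i : Fin N} (hi : i ∉ Set.range c) : cycleQuery c i = {i} :=
  dif_neg hi

theorem card_filter_cycleQuery [Fact (1 < n)] (hc : Injective c) (s : ZMod n) :
    #{j ∈ cycleQuery c (c s) | j ≠ c 0} =
      (if s ≠ 0 then 1 else 0) + (if s + 1 ≠ 0 then 1 else 0) := by
  rw [cycleQuery_apply hc, card_filter, sum_pair (hc.ne (by simp))]
  simp [hc.eq_iff]

/-- Receiver `c s` decodes `x_{c s} - x_{c (s+1)}`, the difference of the star columns of `c s`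
and `c (s+1)`; off the cycle the star column is `x_i` itself. -/
theorem starColumn_cycleQuery_decodes [NeZero n] {q : Type} [Field q]
    {K : Fin N → Finset (Fin N)} (hc : Injective c) (hedge : ∀ s, c (s + 1) ∈ K (c s))
    (i : Fin N) :
    ∃ u : Fin N → q, (∀ j, u j ≠ 0 → j ∈ K i) ∧ u + Pi.single i 1 ∈
      span q ((fun x : {x // x ≠ c 0} => starColumn q (univ.image c) (c 0) x) ''
        ((cycleQuery c i).subtype (· ≠ c 0))) := by
  have ha : c 0 ∈ univ.image c := mem_image_of_mem c (mem_univ 0)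
  by_cases hi : i ∈ Set.range c
  · obtain ⟨s, rfl⟩ := hi
    refine ⟨-Pi.single (c (s + 1)) 1, fun j hj => ?_, ?_⟩
    · obtain rfl : j = c (s + 1) := by
        by_contra h
        simp [Pi.single_eq_of_ne h] at hj
      exact hedge s
    · rw [neg_add_eq_sub, ← starColumn_sub_starColumn (mem_image_of_mem c (mem_univ s))
        (mem_image_of_mem c (mem_univ (s + 1))), cycleQuery_apply hc]
      exact sub_mem (starColumn_mem_span ha (mem_insert_self _ _))
        (starColumn_mem_span ha (mem_insert_of_mem (mem_singleton_self _)))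
  · refine ⟨0, by simp, ?_⟩
    rw [zero_add, cycleQuery_of_notMem hi,
      ← starColumn_of_notMem (C := univ.image c) (a := c 0) (by simpa using hi)]
    exact starColumn_mem_span ha (mem_singleton_self i)

end CycleQuery

theorem ZMod.sum_ite_ne_zero {n : ℕ} [NeZero n] :
    ∑ s : ZMod n, (if s ≠ 0 then 1 else 0) = n - 1 := by
  rw [sum_boole, filter_ne', card_erase_of_mem (mem_univ _), card_univ, ZMod.card, Nat.cast_id]

theorem exists_validScalarCode_of_hasCycleIn {N n : ℕ} (q : Type) [Field q]
    {K : Fin N → Finset (Fin N)} (hn : 3 ≤ n) (hcyc : HasCycleIn K univ n) :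
    ∃ (L : Matrix (Fin N) (Fin (N - 1)) q) (R : Fin N → Finset (Fin (N - 1))),
      ValidScalarCode q K L R ∧ (∀ i, #(R i) ≤ 2) ∧ (∃ i, #(R i) = 2) ∧
        ∑ i, #(R i) = N + n - 2 := by
  have hnN : n ≤ N := by simpa using hcyc.le_card
  obtain ⟨c, -, hc, hedge⟩ := hcyc
  have : NeZero n := ⟨by omega⟩
  have : Fact (1 < n) := ⟨by omega⟩
  obtain ⟨e⟩ : Nonempty (Fin (N - 1) ≃ {x // x ≠ c 0}) := ⟨Fintype.equivOfCardEq (by simp)⟩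
  set C := univ.image c
  set Q := fun i => (cycleQuery c i).subtype (· ≠ c 0)
  have hon : ∀ s, #(Q (c s)) = (if s ≠ 0 then 1 else 0) + (if s + 1 ≠ 0 then 1 else 0) :=
    fun s => (card_subtype _ _).trans (card_filter_cycleQuery hc s)
  have hoff : ∀ i ∉ C, #(Q i) = 1 := fun i hi => by
    rw [card_subtype, cycleQuery_of_notMem (by simpa [C] using hi), filter_singleton,
      if_pos (by rintro rfl; exact hi (mem_image_of_mem c (mem_univ 0))), card_singleton]
  refine ⟨_, _, validScalarCode_of_columns e _ Q (starColumn_cycleQuery_decodes hc hedge),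
    fun i => ?_, ⟨c 1, ?_⟩, ?_⟩ <;> simp only [card_map]
  · by_cases hi : i ∈ C
    · obtain ⟨s, -, rfl⟩ := mem_image.mp hi
      rw [hon]
      split_ifs <;> norm_num
    · rw [hoff i hi]
      norm_num
  · have htwo : (1 + 1 : ZMod n) ≠ 0 := by
      rw [one_add_one_eq_two, ← Nat.cast_ofNat, Ne, ZMod.natCast_eq_zero_iff]
      exact fun h => by have := Nat.le_of_dvd two_pos h; omega
    rw [hon, if_pos one_ne_zero, if_pos htwo]
  · have hshift : ∑ s : ZMod n, (if s + 1 ≠ 0 then 1 else 0) =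
        ∑ s : ZMod n, (if s ≠ 0 then 1 else 0) :=
      Equiv.sum_comp (Equiv.addRight 1) fun s => if s ≠ 0 then 1 else 0
    rw [← sum_add_sum_compl C, sum_image fun s _ t _ h => hc h, sum_congr rfl fun s _ => hon s,
      sum_add_distrib, sum_congr rfl fun i hi => hoff i (mem_compl.mp hi), sum_const, card_compl,
      card_image_of_injective _ hc, hshift, ZMod.sum_ite_ne_zero, card_univ, ZMod.card,
      Fintype.card_fin, smul_eq_mul, mul_one]
    omega

theorem minrank_N_minus_one_optimal_locality_general
    {N Nc : ℕ} (q : Type) [Field q]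
    (K : Fin N → Finset (Fin N)) (hK : ∀ i, i ∉ K i)
    (hminrk : minrk q K = N - 1)
    (hNc : 3 ≤ Nc)
    (hcyc : HasCycleIn K Finset.univ Nc)
    (hshortest : ∀ n, 0 < n → n < Nc → ¬ HasCycleIn K Finset.univ n) :
    (∀ (L : Matrix (Fin N) (Fin (N - 1)) q) (R : Fin N → Finset (Fin (N - 1))),
        ValidScalarCode q K L R →
          (∃ i, 2 ≤ (R i).card) ∧ N + Nc - 2 ≤ ∑ i, (R i).card) ∧
    (∃ (L : Matrix (Fin N) (Fin (N - 1)) q) (R : Fin N → Finset (Fin (N - 1))),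
        ValidScalarCode q K L R ∧ (∀ i, (R i).card ≤ 2) ∧ (∃ i, (R i).card = 2) ∧
        ∑ i, (R i).card = N + Nc - 2) := by
  have hN : 0 < N := by
    have := hcyc.le_card
    rw [card_univ, Fintype.card_fin] at this
    omega
  exact ⟨fun L R h => h.locality_lower_bound hK hminrk hN hNc hshortest,
    exists_validScalarCode_of_hasCycleIn q hNc hcyc⟩

/-- If `minrk_q(G) = N−1` and the shortest directed cycle of `G` has length
`N_c ≥ 3`, then (a) every valid scalar linear index code for `G` of codelength `N−1`
satisfies `max_i |R_i| ≥ 2` and `∑_i |R_i| ≥ N + N_c − 2`; and (b) there is such a code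
with `max_i |R_i| = 2` and `∑_i |R_i| = N + N_c − 2`. -/
theorem minrank_N_minus_one_optimal_locality
    {N Nc : ℕ} (q : Type) [Field q] [Fintype q]
    (K : Fin N → Finset (Fin N)) (hK : ∀ i, i ∉ K i)
    (hminrk : minrk q K = N - 1)
    (hNc : 3 ≤ Nc)
    (hcyc : HasCycleIn K Finset.univ Nc)
    (hshortest : ∀ n, 0 < n → n < Nc → ¬ HasCycleIn K Finset.univ n) :
    (∀ (L : Matrix (Fin N) (Fin (N - 1)) q) (R : Fin N → Finset (Fin (N - 1))),
        ValidScalarCode q K L R →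
          (∃ i, 2 ≤ (R i).card) ∧ N + Nc - 2 ≤ ∑ i, (R i).card) ∧
    (∃ (L : Matrix (Fin N) (Fin (N - 1)) q) (R : Fin N → Finset (Fin (N - 1))),
        ValidScalarCode q K L R ∧ (∀ i, (R i).card ≤ 2) ∧ (∃ i, (R i).card = 2) ∧
        ∑ i, (R i).card = N + Nc - 2) :=
  minrank_N_minus_one_optimal_locality_general q K hK hminrk hNc hcyc hshortest
end

section
/- Let G be a directed cycle of length N on [N] (that is, K_i = {π(i)} for all i, where π is a permutation of [N] consisting of a single N-cycle) and let F_q be any finite field. A vector r = (r_1,...,r_N) of strictly positive integers is feasible for G at rate N−1 through scalar linear coding over F_q — i.e., there exists a valid scalar linear index code for G over F_q with codelength at most N−1 and |R_i| ≤ r_i for every i — if and only if ∑_{i∈[N]} r_i ≥ 2(N−1). -/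
open Finset Submodule Equiv

theorem card_le_card_of_linearIndependent_of_mem_span_image {R M ι κ : Type*} [Ring R]
    [StrongRankCondition R] [AddCommGroup M] [Module R M] [Fintype ι] {w : ι → M}
    (hw : LinearIndependent R w) (c : κ → M) (T : Finset κ) (h : ∀ i, w i ∈ span R (c '' T)) :
    Fintype.card ι ≤ #T := by
  classical
  calc Fintype.card ι ≤ Fintype.card (T.image c : Set M) :=
        linearIndependent_le_span_aux' w hw _ (by rintro _ ⟨i, rfl⟩; simpa using h i)
    _ ≤ #T := by simpa using card_image_le

theorem sum_card_filter_mem_eq_sum_card {α β : Type*} [Fintype α] [Fintype β] [DecidableEq β]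
    (R : α → Finset β) : ∑ k, #{i | k ∈ R i} = ∑ i, #(R i) := by
  simp only [card_filter]
  rw [sum_comm]
  simp

section CycleRank

variable {q : Type*} [Field q] {V : Type*} [Fintype V] [DecidableEq V]
  {π : Perm V} {v : V → V → q}

theorem eq_zero_of_sum_smul_eq_zero_of_isCycle (hπ : π.IsCycle) (hsupp : π.support = univ)
    (hdiag : ∀ i, v i i ≠ 0) (hoff : ∀ i j, j ≠ i → j ≠ π i → v i j = 0)
    {c : V → q} (hc : ∑ i, c i • v i = 0) {i₀ : V} (hi₀ : c i₀ = 0) (x : V) : c x = 0 := by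
  have hmoved : ∀ i, π i ≠ i := fun i => Perm.mem_support.1 (hsupp ▸ mem_univ i)
  have propagate : ∀ j, c (π.symm j) = 0 → c j = 0 := by
    intro j hj
    have hcoord : ∑ i, c i * v i j = 0 := by simpa using congrFun hc j
    rw [sum_eq_single j _ (by simp)] at hcoord
    · exact (mul_eq_zero.1 hcoord).resolve_right (hdiag j)
    · intro i _ hij
      by_cases hj' : j = π i
      · rw [hj', symm_apply_apply] at hj
        rw [hj, zero_mul]
      · rw [hoff i j (Ne.symm hij) hj', mul_zero]
  have hpow : ∀ k : ℕ, c ((π ^ k) i₀) = 0 := by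
    intro k
    induction k with
    | zero => simpa using hi₀
    | succ k ih => exact propagate _ (by rwa [pow_succ', Perm.mul_apply, symm_apply_apply])
  obtain ⟨k, rfl⟩ := hπ.exists_pow_eq (hmoved i₀) (hmoved x)
  exact hpow k

theorem linearIndepOn_compl_singleton_of_isCycle (hπ : π.IsCycle) (hsupp : π.support = univ)
    (hdiag : ∀ i, v i i ≠ 0) (hoff : ∀ i j, j ≠ i → j ≠ π i → v i j = 0) (i₀ : V) :
    LinearIndepOn q v {i₀}ᶜ := by
  rw [linearIndepOn_iff]
  intro l hl hl0
  ext x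
  rw [Finsupp.linearCombination_apply, Finsupp.sum_fintype _ _ (by simp)] at hl0
  exact eq_zero_of_sum_smul_eq_zero_of_isCycle hπ hsupp hdiag hoff hl0
    ((Finsupp.mem_supported' q l).1 hl i₀ (by simp)) x

theorem card_sub_one_le_of_isCycle (hπ : π.IsCycle) (hsupp : π.support = univ)
    (hdiag : ∀ i, v i i ≠ 0) (hoff : ∀ i j, j ≠ i → j ≠ π i → v i j = 0)
    {κ : Type*} (c : κ → V → q) (T : Finset κ) (i₀ : V)
    (h : ∀ i ≠ i₀, v i ∈ span q (c '' T)) : Fintype.card V - 1 ≤ #T := by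
  have := card_le_card_of_linearIndependent_of_mem_span_image
    (linearIndepOn_compl_singleton_of_isCycle hπ hsupp hdiag hoff i₀) c T (fun i => h i i.2)
  simpa [filter_ne'] using this

theorem ValidScalarCode.two_mul_le_sum_card {q : Type} [Field q] {N ℓ : ℕ}
    {π : Perm (Fin N)} (hπ : π.IsCycle) (hsupp : π.support = univ)
    {L : Matrix (Fin N) (Fin ℓ) q} {R : Fin N → Finset (Fin ℓ)}
    (hcode : ValidScalarCode q (fun i => {π i}) L R) (hℓ : ℓ ≤ N - 1) :
    2 * (N - 1) ≤ ∑ i, #(R i) := by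
  choose u hu hspan using hcode
  have hmoved : ∀ i, π i ≠ i := fun i => Perm.mem_support.1 (hsupp ▸ mem_univ i)
  have hu_eq_zero : ∀ i j, j ≠ π i → u i j = 0 := fun i j hj => by
    by_contra h
    exact hj (mem_singleton.1 (hu i j h))
  set v : Fin N → Fin N → q := fun i => u i + Pi.single i 1 with hv
  have hdiag : ∀ i, v i i ≠ 0 := fun i => by
    simp [hv, hu_eq_zero i i (hmoved i).symm]
  have hoff : ∀ i j, j ≠ i → j ≠ π i → v i j = 0 := fun i j hji hj => by
    simp [hv, hu_eq_zero i j hj, hji]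
  have hrank := card_sub_one_le_of_isCycle hπ hsupp hdiag hoff (fun k j => L j k)
  simp only [Fintype.card_fin] at hrank
  obtain ⟨i₀, -⟩ := hπ
  have hNℓ : N - 1 ≤ ℓ := by
    simpa using hrank univ i₀ fun i _ =>
      span_mono (Set.image_mono (coe_subset.2 (subset_univ _))) (hspan i)
  have hshared : ∀ k, 2 ≤ #{i | k ∈ R i} := by
    intro k
    by_contra! h
    have : Nonempty (Fin N) := ⟨i₀⟩
    obtain ⟨i₁, hi₁⟩ := card_le_one_iff_subset_singleton.1 (Nat.le_of_lt_succ h)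
    have hRk : ∀ i ≠ i₁, R i ⊆ univ.erase k := fun i hi k' hk' =>
      mem_erase.2 ⟨fun h => hi (mem_singleton.1 (hi₁ (by simp [← h, hk']))), mem_univ k'⟩
    have := hrank (univ.erase k) i₁ fun i hi =>
      span_mono (Set.image_mono (coe_subset.2 (hRk i hi))) (hspan i)
    rw [card_erase_of_mem (mem_univ k), card_univ, Fintype.card_fin] at this
    have := k.pos
    omega
  calc 2 * (N - 1) ≤ ∑ _k : Fin ℓ, 2 := by
        simp only [sum_const, card_univ, Fintype.card_fin, smul_eq_mul]
        omega
    _ ≤ ∑ k, #{i | k ∈ R i} := sum_le_sum fun k _ => hshared k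
    _ = ∑ i, #(R i) := sum_card_filter_mem_eq_sum_card R

end CycleRank

section SpanningTree

variable {V : Type*} [DecidableEq V]

structure IsBoundedSpanningTree {m : ℕ} (s : Finset V) (r : V → ℕ) (ε : Fin m → V × V) :
    Prop where
  card_add_one : m + 1 = #s
  fst_mem : ∀ k, (ε k).1 ∈ s
  snd_mem : ∀ k, (ε k).2 ∈ s
  degree_le : ∀ v ∈ s, #{k | (ε k).1 = v ∨ (ε k).2 = v} ≤ r v
  connected : ∀ x ∈ s, ∀ y ∈ s, Relation.EqvGen (fun a b => ∃ k, ε k = (a, b)) x y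

theorem isBoundedSpanningTree_singleton (b : V) (r : V → ℕ) :
    IsBoundedSpanningTree {b} r (Fin.elim0 : Fin 0 → V × V) where
  card_add_one := by simp
  fst_mem k := k.elim0
  snd_mem k := k.elim0
  degree_le := by simp
  connected := by
    simp only [mem_singleton]
    rintro x rfl y rfl
    exact Relation.EqvGen.refl _

theorem IsBoundedSpanningTree.cons {m : ℕ} {s : Finset V} {r' r : V → ℕ} {ε : Fin m → V × V}
    (h : IsBoundedSpanningTree s r' ε) {a w : V} (ha : a ∉ s) (hw : w ∈ s) (hra : 1 ≤ r a)
    (hr : ∀ v ∈ s, r' v + (if v = w then 1 else 0) ≤ r v) :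
    IsBoundedSpanningTree (insert a s) r (Fin.cons (a, w) ε) where
  card_add_one := by rw [card_insert_of_notMem ha, ← h.card_add_one]
  fst_mem k := by
    cases k using Fin.cases with
    | zero => exact mem_insert_self a s
    | succ k => exact mem_insert_of_mem (h.fst_mem k)
  snd_mem k := by
    cases k using Fin.cases with
    | zero => exact mem_insert_of_mem hw
    | succ k => exact mem_insert_of_mem (h.snd_mem k)
  degree_le v hv := by
    rw [Fin.card_filter_univ_succ']
    simp only [Fin.cons_zero, Fin.cons_succ]
    rcases mem_insert.1 hv with rfl | hv
    · have hfresh : #{k | (ε k).1 = v ∨ (ε k).2 = v} = 0 := by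
        rw [card_eq_zero, filter_eq_empty_iff]
        rintro k - (hk | hk)
        · exact ha (hk ▸ h.fst_mem k)
        · exact ha (hk ▸ h.snd_mem k)
      simpa [hfresh] using hra
    · have hav : a ≠ v := fun hav => ha (hav ▸ hv)
      have := h.degree_le v hv
      have := hr v hv
      by_cases hvw : v = w
      · subst hvw
        simp only [hav, or_true, if_true] at this ⊢
        omega
      · simp only [hav, hvw, if_false, Ne.symm hvw, or_self] at this ⊢
        omega
  connected := by
    set E := fun x y => ∃ k, (Fin.cons (a, w) ε : Fin (m + 1) → V × V) k = (x, y)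
    have hlift : ∀ x ∈ s, ∀ y ∈ s, Relation.EqvGen E x y := fun x hx y hy =>
      Relation.EqvGen.mono (fun _ _ ⟨k, hk⟩ => ⟨k.succ, by simpa using hk⟩) x y
        (h.connected x hx y hy)
    have hto_w : ∀ x ∈ insert a s, Relation.EqvGen E x w := by
      intro x hx
      rcases mem_insert.1 hx with rfl | hx
      · exact Relation.EqvGen.rel _ _ ⟨0, rfl⟩
      · exact hlift x hx w hw
    exact fun x hx y hy => (hto_w x hx).trans _ _ _ (hto_w y hy).symm

theorem exists_isBoundedSpanningTree (s : Finset V) (hs : 2 ≤ #s) (r : V → ℕ)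
    (hr : ∀ v ∈ s, 1 ≤ r v) (hsum : 2 * (#s - 1) ≤ ∑ v ∈ s, r v) :
    ∃ (m : ℕ) (ε : Fin m → V × V), IsBoundedSpanningTree s r ε := by
  obtain ⟨n, hn⟩ : ∃ n, #s = n + 2 := ⟨#s - 2, by omega⟩
  clear hs
  induction n generalizing s r with
  | zero =>
    obtain ⟨a, b, hab, rfl⟩ := card_eq_two.1 hn
    exact ⟨_, _, (isBoundedSpanningTree_singleton b 0).cons (by simpa using hab)
      (mem_singleton_self b) (hr a (by simp)) (by simpa using hr b (by simp))⟩
  | succ n ih =>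
    -- a vertex `a` with least bound becomes a leaf hanging off some `w` with `r w ≥ 2`
    obtain ⟨a, ha, hmin⟩ := s.exists_min_image r (card_pos.1 (by omega))
    have hcard : #(s.erase a) = n + 2 := by rw [card_erase_of_mem ha, hn]; rfl
    have hsum_erase : 2 * (#s - 1) - 1 ≤ ∑ v ∈ s.erase a, r v := by
      have hsplit := sum_erase_add s r ha
      by_cases hra : r a ≤ 1
      · omega
      · calc 2 * (#s - 1) - 1 ≤ #(s.erase a) * 2 := by omega
          _ ≤ ∑ v ∈ s.erase a, r v := by
            simpa using card_nsmul_le_sum (s.erase a) r 2 fun v hv => by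
              have := hmin v (mem_of_mem_erase hv)
              omega
    obtain ⟨w, hw, hrw⟩ : ∃ w ∈ s.erase a, 2 ≤ r w := by
      by_contra! hsmall
      have : ∑ v ∈ s.erase a, r v ≤ #(s.erase a) := by
        simpa using sum_le_card_nsmul (s.erase a) r 1 fun v hv => Nat.le_of_lt_succ (hsmall v hv)
      omega
    set r' : V → ℕ := fun v => r v - if v = w then 1 else 0 with hr'
    have hr_eq : ∀ v ∈ s.erase a, r' v + (if v = w then 1 else 0) = r v := by
      intro v hv
      have := hr v (mem_of_mem_erase hv)
      split_ifs with hvw <;> simp only [hr', hvw, if_true, if_false] <;> omega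
    have hsum' : ∑ v ∈ s.erase a, r' v + 1 = ∑ v ∈ s.erase a, r v := by
      rw [← sum_congr rfl hr_eq, sum_add_distrib, sum_ite_eq' _ _ _, if_pos hw]
    have hr'_pos : ∀ v ∈ s.erase a, 1 ≤ r' v := by
      intro v hv
      have h₁ := hr_eq v hv
      have h₂ := hr v (mem_of_mem_erase hv)
      by_cases hvw : v = w
      · subst hvw
        simp only [if_true] at h₁
        omega
      · simp only [hvw, if_false] at h₁
        omega
    obtain ⟨m, ε, hε⟩ := ih (s.erase a) r' hr'_pos (by omega) hcard
    rw [← insert_erase ha]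
    exact ⟨_, _, hε.cons (notMem_erase a s) hw (hr a ha) fun v hv => (hr_eq v hv).le⟩

theorem single_sub_single_mem_span_of_eqvGen {q ι : Type*} [Field q] (ε : ι → V × V) {x y : V}
    (h : Relation.EqvGen (fun a b => ∃ k, ε k = (a, b)) x y) :
    (Pi.single x 1 - Pi.single y 1 : V → q) ∈
      span q (Set.range fun k => (Pi.single (ε k).1 1 - Pi.single (ε k).2 1 : V → q)) := by
  induction h with
  | rel a b hab =>
    obtain ⟨k, hk⟩ := hab
    exact subset_span ⟨k, by simp [hk]⟩
  | refl a => simp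
  | symm a b _ ih => simpa using neg_mem ih
  | trans a b c _ _ ih₁ ih₂ => simpa using add_mem ih₁ ih₂

end SpanningTree

section CodeConstruction

variable {q : Type} [Field q] {N ℓ : ℕ}

theorem exists_matrix_sum_smul_eq {ι n m : Type*} [Fintype ι] (c : ι → n → q) (w : n → m → q)
    (h : ∀ j, (fun i => w i j) ∈ span q (Set.range c)) :
    ∃ L : Matrix m ι q, ∀ i, ∑ k, c k i • (fun j => L j k) = w i := by
  choose L hL using fun j => (mem_span_range_iff_exists_fun q).1 (h j)
  refine ⟨L, fun i => funext fun j => ?_⟩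
  simpa [Finset.sum_apply, mul_comm] using congrFun (hL j) i

theorem validScalarCode_of_sum_smul_eq (K : Fin N → Finset (Fin N)) (L : Matrix (Fin N) (Fin ℓ) q)
    (R : Fin N → Finset (Fin ℓ)) (C : Fin N → Fin ℓ → q) (hC : ∀ i k, k ∉ R i → C i k = 0)
    (u : Fin N → Fin N → q) (hu : ∀ i j, u i j ≠ 0 → j ∈ K i)
    (h : ∀ i, ∑ k, C i k • (fun j => L j k) = u i + Pi.single i 1) :
    ValidScalarCode q K L R := by
  intro i
  refine ⟨u i, hu i, ?_⟩
  rw [← h i, ← sum_subset (subset_univ (R i)) fun k _ hk => by rw [hC i k hk, zero_smul]]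
  exact sum_smul_mem _ _ fun k hk => subset_span ⟨k, hk, rfl⟩

theorem exists_validScalarCode_of_isBoundedSpanningTree (π : Perm (Fin N)) {r : Fin N → ℕ}
    {ε : Fin ℓ → Fin N × Fin N} (hε : IsBoundedSpanningTree univ r ε) :
    ∃ (L : Matrix (Fin N) (Fin ℓ) q) (R : Fin N → Finset (Fin ℓ)),
      ValidScalarCode q (fun i => {π i}) L R ∧ ∀ i, #(R i) ≤ r i := by
  set c : Fin ℓ → Fin N → q := fun k => Pi.single (ε k).1 1 - Pi.single (ε k).2 1 with hc
  have hcol : ∀ j, (fun i => (Pi.single i 1 - Pi.single (π i) 1 : Fin N → q) j) =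
      Pi.single j 1 - Pi.single (π.symm j) 1 := by
    intro j
    ext i
    simp [Pi.single_apply, eq_comm, eq_symm_apply]
  obtain ⟨L, hL⟩ := exists_matrix_sum_smul_eq c _ fun j => by
    rw [hcol]
    exact single_sub_single_mem_span_of_eqvGen ε (hε.connected _ (mem_univ _) _ (mem_univ _))
  refine ⟨L, fun i => {k | (ε k).1 = i ∨ (ε k).2 = i},
    validScalarCode_of_sum_smul_eq _ L _ (fun i k => c k i) ?_ (fun i => -Pi.single (π i) 1) ?_ ?_,
    fun i => hε.degree_le i (mem_univ i)⟩
  · intro i k hk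
    simp only [mem_filter, mem_univ, true_and, not_or] at hk
    simp [hc, Ne.symm hk.1, Ne.symm hk.2]
  · intro i j hj
    by_contra hji
    simp_all [Pi.single_apply]
  · intro i
    rw [hL i, neg_add_eq_sub]

end CodeConstruction

theorem directed_cycle_feasible_localities_general
    {N : ℕ} (q : Type) [Field q]
    (π : Equiv.Perm (Fin N)) (hπ : π.IsCycle) (hπsupp : π.support = Finset.univ)
    (r : Fin N → ℕ) (hr : ∀ i, 0 < r i) :
    (∃ (ℓ : ℕ) (L : Matrix (Fin N) (Fin ℓ) q) (R : Fin N → Finset (Fin ℓ)),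
        ℓ ≤ N - 1 ∧ ValidScalarCode q (fun i => {π i}) L R ∧ ∀ i, (R i).card ≤ r i)
    ↔ 2 * (N - 1) ≤ ∑ i, r i := by
  constructor
  · rintro ⟨ℓ, L, R, hℓ, hcode, hR⟩
    exact (hcode.two_mul_le_sum_card hπ hπsupp hℓ).trans (sum_le_sum fun i _ => hR i)
  · intro hsum
    have hN : 2 ≤ #(univ : Finset (Fin N)) := hπsupp ▸ hπ.two_le_card_support
    obtain ⟨m, ε, hε⟩ :=
      exists_isBoundedSpanningTree univ hN r (fun i _ => hr i) (by simpa using hsum)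
    obtain ⟨L, R, hcode, hR⟩ := exists_validScalarCode_of_isBoundedSpanningTree (q := q) π hε
    refine ⟨m, L, R, ?_, hcode, hR⟩
    have := hε.card_add_one
    simp only [card_univ, Fintype.card_fin] at this
    omega

/-- Let `G` be a directed cycle of length `N` on `[N]`, i.e. `K i = {π i}`
where `π` is a permutation of `Fin N` consisting of a single `N`-cycle. A vector
`r = (r_1,…,r_N)` of strictly positive integers is feasible at rate `N−1` through scalar
linear coding over `F_q` (there is a valid scalar linear code of codelength at most `N−1`
with `|R_i| ≤ r_i` for all `i`) if and only if `∑_i r_i ≥ 2(N−1)`. -/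
theorem directed_cycle_feasible_localities
    {N : ℕ} (q : Type) [Field q] [Fintype q]
    (π : Equiv.Perm (Fin N)) (hπ : π.IsCycle) (hπsupp : π.support = Finset.univ)
    (r : Fin N → ℕ) (hr : ∀ i, 0 < r i) :
    (∃ (ℓ : ℕ) (L : Matrix (Fin N) (Fin ℓ) q) (R : Fin N → Finset (Fin ℓ)),
        ℓ ≤ N - 1 ∧ ValidScalarCode q (fun i => {π i}) L R ∧ ∀ i, (R i).card ≤ r i)
    ↔ 2 * (N - 1) ≤ ∑ i, r i :=
  directed_cycle_feasible_localities_general q π hπ hπsupp r hr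
end

section
/- Let G be a single unicast index coding problem on [N] such that the cyclic permutation σ of [N] defined by σ(i) = (i mod N) + 1 is an automorphism of G. Then for every ℓ ≥ minrk_q(G) there exists a valid vector linear index code for G over F_q with message length N, broadcast rate ℓ, and locality at most ℓ(N−ℓ+1)/N; consequently β*_{G,q}( ℓ(N−ℓ+1)/N ) ≤ ℓ. -/
theorem exists_finset_card_eq_range_subset_span {𝕜 V ι : Type*} [Field 𝕜] [AddCommGroup V]
    [Module 𝕜 V] [Fintype ι] (v : ι → V) {ℓ : ℕ}
    (hrank : Module.finrank 𝕜 (Submodule.span 𝕜 (Set.range v)) ≤ ℓ) (hℓ : ℓ ≤ Fintype.card ι) :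
    ∃ B : Finset ι, B.card = ℓ ∧ Set.range v ⊆ Submodule.span 𝕜 (v '' B) := by
  classical
  obtain ⟨b, -, -, hspan, hindep⟩ :=
    exists_linearIndepOn_extension (linearIndepOn_empty 𝕜 v) (Set.empty_subset Set.univ)
  rw [Set.image_univ] at hspan
  have hcard : b.toFinset.card ≤ ℓ := by
    have hspan_eq : Submodule.span 𝕜 (v '' b) = Submodule.span 𝕜 (Set.range v) :=
      le_antisymm (Submodule.span_mono (Set.image_subset_range v b)) (Submodule.span_le.mpr hspan)
    rw [← hspan_eq, Set.image_eq_range, finrank_span_eq_card hindep] at hrank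
    simpa using hrank
  obtain ⟨B, hbB, hBcard⟩ := Finset.exists_superset_card_eq hcard hℓ
  refine ⟨B, hBcard, hspan.trans (Submodule.span_mono (Set.image_mono ?_))⟩
  simpa using hbB

theorem mem_add_iff_of_mem_add_one_iff {N : ℕ} [NeZero N] {K : Fin N → Finset (Fin N)}
    (hK : ∀ i j : Fin N, j ∈ K i ↔ j + 1 ∈ K (i + 1)) (m i j : Fin N) :
    j ∈ K i ↔ j + m ∈ K (i + m) := by
  obtain ⟨k, hk⟩ := m
  induction k generalizing i j with
  | zero => simp [Fin.mk_zero']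
  | succ k ih =>
    have hsucc : (⟨k + 1, hk⟩ : Fin N) = ⟨k, by omega⟩ + 1 :=
      Fin.ext (by rw [Fin.val_add, Fin.val_one', Nat.add_mod_mod, Nat.mod_eq_of_lt hk])
    rw [hsucc, ← add_assoc, ← add_assoc]
    exact (ih i j (by omega)).trans (hK _ _)

def Fits {N : ℕ} {q : Type} [Field q] (K : Fin N → Finset (Fin N))
    (A : Matrix (Fin N) (Fin N) q) : Prop :=
  (∀ i, A i i = 1) ∧ ∀ i j, j ≠ i → j ∉ K i → A j i = 0

/-- The case `M = 1` of `ValidVectorLinearCode`, with codeword symbols indexed by any type. -/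
def ValidScalarLinearCode {N : ℕ} {ι : Type*} (q : Type) [Field q]
    (K : Fin N → Finset (Fin N)) (L : Matrix (Fin N) ι q) (R : Fin N → Finset ι) : Prop :=
  ∀ i, ∃ u : Fin N → q, (∀ p, u p ≠ 0 → p ∈ K i) ∧
    u + Pi.single i 1 ∈ Submodule.span q (L.col '' (R i : Set ι))

theorem exists_fits_rank_eq_minrk {N : ℕ} (q : Type) [Field q] (K : Fin N → Finset (Fin N)) :
    ∃ A : Matrix (Fin N) (Fin N) q, Fits K A ∧ A.rank = minrk q K := by
  have hne : {n : ℕ | ∃ A : Matrix (Fin N) (Fin N) q,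
      (∀ i, A i i = 1) ∧ (∀ i j, j ≠ i → j ∉ K i → A j i = 0) ∧ A.rank = n}.Nonempty :=
    ⟨_, 1, fun i => Matrix.one_apply_eq i, fun _ _ hji _ => Matrix.one_apply_ne hji, rfl⟩
  obtain ⟨A, hdiag, hzero, hrank⟩ := Nat.sInf_mem hne
  exact ⟨A, ⟨hdiag, hzero⟩, hrank⟩

section

variable {N : ℕ} {q : Type} [Field q] {K : Fin N → Finset (Fin N)}

theorem Fits.validScalarLinearCode {ι : Type*} {A : Matrix (Fin N) (Fin N) q} (hA : Fits K A)
    {L : Matrix (Fin N) ι q} {R : Fin N → Finset ι}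
    (hR : ∀ i, A.col i ∈ Submodule.span q (L.col '' (R i : Set ι))) :
    ValidScalarLinearCode q K L R := by
  intro i
  refine ⟨A.col i - Pi.single i 1, fun p hp => ?_, by simpa using hR i⟩
  by_cases hpi : p = i
  · subst hpi
    simp [Matrix.col_apply, hA.1] at hp
  · by_contra hpK
    simp [Matrix.col_apply, hA.2 i p hpi hpK, Pi.single_eq_of_ne hpi] at hp

theorem ValidScalarLinearCode.submatrix_symm {ι : Type*} {L : Matrix (Fin N) ι q}
    {R : Fin N → Finset ι} (h : ValidScalarLinearCode q K L R) (σ : Equiv.Perm (Fin N))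
    (hσ : ∀ i j, j ∈ K i ↔ σ j ∈ K (σ i)) :
    ValidScalarLinearCode q K (L.submatrix σ.symm id) (fun i => R (σ.symm i)) := by
  intro i
  obtain ⟨u, hu, hspan⟩ := h (σ.symm i)
  refine ⟨u ∘ σ.symm, fun p hp => by simpa using (hσ _ _).mp (hu _ hp), ?_⟩
  have hmap := Submodule.mem_map_of_mem (f := LinearMap.funLeft q q σ.symm) hspan
  rw [Submodule.map_span, Set.image_image] at hmap
  have hvec : u ∘ σ.symm + Pi.single i 1 =
      LinearMap.funLeft q q σ.symm (u + Pi.single (σ.symm i) 1) := by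
    ext p
    simp [Pi.single_apply]
  rw [hvec]
  exact hmap

def layerEmbedding {M : ℕ} (m : Fin M) : (Fin N → q) →ₗ[q] (Fin N × Fin M → q) :=
  LinearMap.pi fun p => if p.2 = m then LinearMap.proj p.1 else 0

theorem exists_validVectorLinearCode_of_layers {M ℓ' : ℕ} {ι : Type*} [Fintype ι]
    (Ls : Fin M → Matrix (Fin N) ι q) (Rs : Fin M → Fin N → Finset ι)
    (hvalid : ∀ m, ValidScalarLinearCode q K (Ls m) (Rs m)) (e : Fin M × ι ≃ Fin ℓ') :
    ∃ (L : Matrix (Fin N × Fin M) (Fin ℓ') q) (R : Fin N → Finset (Fin ℓ')),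
      ValidVectorLinearCode q K L R ∧ ∀ i, (R i).card = ∑ m, (Rs m i).card := by
  classical
  let L : Matrix (Fin N × Fin M) (Fin ℓ') q := fun p k => layerEmbedding (e.symm k).1
    ((Ls (e.symm k).1).col (e.symm k).2) p
  let R : Fin N → Finset (Fin ℓ') := fun i =>
    (Finset.univ.filter fun mt : Fin M × ι => mt.2 ∈ Rs mt.1 i).map e.toEmbedding
  refine ⟨L, R, fun i m => ?_, fun i => ?_⟩
  · obtain ⟨u, hu, hspan⟩ := hvalid m i
    refine ⟨layerEmbedding m u, fun p hp => ?_, ?_⟩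
    · by_cases hpm : p.2 = m
      · exact hu _ (by simpa [layerEmbedding, hpm] using hp)
      · simp [layerEmbedding, hpm] at hp
    · have hvec : layerEmbedding m u + Pi.single (i, m) 1 =
          layerEmbedding m (u + Pi.single i 1) := by
        ext ⟨p, m'⟩
        by_cases hm' : m' = m <;> simp [layerEmbedding, hm', Pi.single_apply]
      have hmap := Submodule.mem_map_of_mem (f := layerEmbedding m) hspan
      rw [Submodule.map_span, Set.image_image] at hmap
      rw [hvec]
      refine Submodule.span_mono ?_ hmap
      rintro _ ⟨t, ht, rfl⟩
      exact ⟨e (m, t), by simpa [R] using ht, by simp [L]⟩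
  · rw [Finset.card_map, Finset.card_filter, Fintype.sum_prod_type]
    simp

theorem ValidVectorLinearCode.exists_of_codelength_le {M ℓ₁ ℓ₂ : ℕ}
    {L : Matrix (Fin N × Fin M) (Fin ℓ₁) q} {R : Fin N → Finset (Fin ℓ₁)}
    (h : ValidVectorLinearCode q K L R) (hℓ : ℓ₁ ≤ ℓ₂) :
    ∃ (L' : Matrix (Fin N × Fin M) (Fin ℓ₂) q) (R' : Fin N → Finset (Fin ℓ₂)),
      ValidVectorLinearCode q K L' R' ∧ ∀ i, (R' i).card = (R i).card := by
  let L' : Matrix (Fin N × Fin M) (Fin ℓ₂) q := fun p k =>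
    if hk : k.val < ℓ₁ then L p ⟨k, hk⟩ else 0
  let R' : Fin N → Finset (Fin ℓ₂) := fun i => (R i).map (Fin.castLEEmb hℓ)
  have hcols : ∀ i, (fun k p => L' p k) '' (R' i : Set (Fin ℓ₂)) =
      (fun k p => L p k) '' (R i : Set (Fin ℓ₁)) := by
    intro i
    simp [R', L', Set.image_image]
  refine ⟨L', R', fun i m => ?_, fun i => Finset.card_map _⟩
  simpa only [hcols] using h i m

theorem sum_ite_mem_one_card {α : Type*} [Fintype α] [DecidableEq α] (B : Finset α) :
    (∑ j, if j ∈ B then 1 else B.card) = B.card * (Fintype.card α - B.card + 1) := by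
  rw [Finset.sum_ite]
  simp only [Finset.filter_mem_eq_of_subset (Finset.subset_univ B), Finset.filter_not,
    ← Finset.compl_eq_univ_sdiff, Finset.card_compl, Finset.sum_const, smul_eq_mul, mul_one]
  ring

section Cyclic

variable [NeZero N]

theorem exists_cyclic_code_of_range_subset_span
    (hcyc : ∀ m i j : Fin N, j ∈ K i ↔ j + m ∈ K (i + m))
    {A : Matrix (Fin N) (Fin N) q} (hA : Fits K A) (B : Finset (Fin N))
    (hB : Set.range A.col ⊆ Submodule.span q (A.col '' B)) :
    ∃ (L : Matrix (Fin N × Fin N) (Fin (N * B.card)) q)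
      (R : Fin N → Finset (Fin (N * B.card))),
      ValidVectorLinearCode q K L R ∧ ∀ i, (R i).card = B.card * (N - B.card + 1) := by
  let L₀ : Matrix (Fin N) B q := A.submatrix id Subtype.val
  let R₀ : Fin N → Finset B := fun i => if hi : i ∈ B then {⟨i, hi⟩} else Finset.univ
  have hL₀ : ValidScalarLinearCode q K L₀ R₀ := by
    refine hA.validScalarLinearCode fun i => ?_
    by_cases hi : i ∈ B
    · exact Submodule.subset_span ⟨⟨i, hi⟩, by simp [R₀, hi], rfl⟩
    · have hcols : L₀.col '' (R₀ i : Set B) = A.col '' B := by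
        simp only [R₀, hi, dite_false, Finset.coe_univ, Set.image_univ]
        exact (Set.range_comp A.col Subtype.val).trans (by rw [Subtype.range_coe])
      exact hcols ▸ hB ⟨i, rfl⟩
  have hR₀ : ∀ i, (R₀ i).card = if i ∈ B then 1 else B.card := by
    intro i
    by_cases hi : i ∈ B <;> simp [R₀, hi]
  obtain ⟨L, R, hL, hR⟩ := exists_validVectorLinearCode_of_layers
    (fun m => L₀.submatrix (Equiv.addRight m).symm id)
    (fun m i => R₀ ((Equiv.addRight m).symm i))
    (fun m => hL₀.submatrix_symm (Equiv.addRight m) (hcyc m))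
    ((Equiv.prodCongr (Equiv.refl _) B.equivFin).trans finProdFinEquiv)
  refine ⟨L, R, hL, fun i => ?_⟩
  calc (R i).card = ∑ j, (R₀ (i - j)).card := by simp [hR, sub_eq_add_neg]
    _ = ∑ j, (R₀ j).card := Equiv.sum_comp (Equiv.subLeft i) (fun j => (R₀ j).card)
    _ = B.card * (N - B.card + 1) := by
      simpa only [hR₀, Fintype.card_fin] using sum_ite_mem_one_card B

theorem exists_cyclic_code_of_rank_le (hcyc : ∀ m i j : Fin N, j ∈ K i ↔ j + m ∈ K (i + m))
    {A : Matrix (Fin N) (Fin N) q} (hA : Fits K A) {ℓ : ℕ} (hrank : A.rank ≤ ℓ) :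
    ∃ (L : Matrix (Fin N × Fin N) (Fin (N * ℓ)) q) (R : Fin N → Finset (Fin (N * ℓ))),
      ValidVectorLinearCode q K L R ∧ ∀ i, (R i).card ≤ ℓ * (N - ℓ + 1) := by
  rcases le_or_gt ℓ N with hℓN | hNℓ
  · rw [Matrix.rank_eq_finrank_span_cols] at hrank
    obtain ⟨B, rfl, hB⟩ :=
      exists_finset_card_eq_range_subset_span A.col hrank (by simpa using hℓN)
    obtain ⟨L, R, hL, hR⟩ := exists_cyclic_code_of_range_subset_span hcyc hA B hB
    exact ⟨L, R, hL, fun i => (hR i).le⟩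
  · obtain ⟨L, R, hL, hR⟩ := exists_cyclic_code_of_range_subset_span hcyc hA Finset.univ
      (by simp [Submodule.subset_span])
    obtain ⟨L', R', hL', hR'⟩ :=
      hL.exists_of_codelength_le (ℓ₂ := N * ℓ) (by simpa using Nat.mul_le_mul_left N hNℓ.le)
    refine ⟨L', R', hL', fun i => ?_⟩
    rw [hR', hR, Nat.sub_eq_zero_of_le hNℓ.le]
    simpa using hNℓ.le

end Cyclic

end

theorem cyclic_symmetry_achievability_general
    {N : ℕ} [NeZero N] (q : Type) [Field q]
    (K : Fin N → Finset (Fin N))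
    (hauto : ∀ i j : Fin N, j ∈ K i ↔ j + 1 ∈ K (i + 1))
    (ℓ : ℕ) (hℓ : minrk q K ≤ ℓ) :
    (∃ (L : Matrix (Fin N × Fin N) (Fin (N * ℓ)) q) (R : Fin N → Finset (Fin (N * ℓ))),
        ValidVectorLinearCode q K L R ∧ ∀ i, (R i).card ≤ ℓ * (N - ℓ + 1)) ∧
    sInf {β : ℝ | ∃ (M ℓ' : ℕ) (L : Matrix (Fin N × Fin M) (Fin ℓ') q)
        (R : Fin N → Finset (Fin ℓ')),
        0 < M ∧ ValidVectorLinearCode q K L R ∧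
        (∀ i, ((R i).card : ℝ) / M ≤ ((ℓ * (N - ℓ + 1) : ℕ) : ℝ) / N) ∧
        β = (ℓ' : ℝ) / M}
      ≤ ℓ := by
  obtain ⟨A, hA, hrank⟩ := exists_fits_rank_eq_minrk q K
  have hcode := exists_cyclic_code_of_rank_le (mem_add_iff_of_mem_add_one_iff hauto) hA
    (hrank.trans_le hℓ)
  refine ⟨hcode, csInf_le ⟨0, ?_⟩ ?_⟩
  · rintro _ ⟨M, ℓ', -, -, -, -, -, rfl⟩
    positivity
  · obtain ⟨L, R, hL, hR⟩ := hcode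
    refine ⟨N, N * ℓ, L, R, NeZero.pos N, hL, fun i => ?_, ?_⟩
    · gcongr
      exact_mod_cast hR i
    · rw [Nat.cast_mul, mul_div_cancel_left₀ _ (Nat.cast_ne_zero.mpr (NeZero.ne N))]

/-- If the cyclic shift `σ(i) = i + 1` of `Fin N` is an automorphism of `G`
(`j ∈ K i ↔ j+1 ∈ K (i+1)`), then for every `ℓ ≥ minrk_q(G)` there exists a valid vector
linear index code for `G` over `F_q` with message length `N`, broadcast rate `ℓ`
(codelength `N·ℓ`), and locality at most `ℓ(N−ℓ+1)/N`; consequently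
`β*_{G,q}(ℓ(N−ℓ+1)/N) ≤ ℓ`. -/
theorem cyclic_symmetry_achievability
    {N : ℕ} [NeZero N] (q : Type) [Field q] [Fintype q]
    (K : Fin N → Finset (Fin N)) (hK : ∀ i, i ∉ K i)
    (hauto : ∀ i j : Fin N, j ∈ K i ↔ j + 1 ∈ K (i + 1))
    (ℓ : ℕ) (hℓ : minrk q K ≤ ℓ) :
    (∃ (L : Matrix (Fin N × Fin N) (Fin (N * ℓ)) q) (R : Fin N → Finset (Fin (N * ℓ))),
        ValidVectorLinearCode q K L R ∧ ∀ i, (R i).card ≤ ℓ * (N - ℓ + 1)) ∧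
    sInf {β : ℝ | ∃ (M ℓ' : ℕ) (L : Matrix (Fin N × Fin M) (Fin ℓ') q)
        (R : Fin N → Finset (Fin ℓ')),
        0 < M ∧ ValidVectorLinearCode q K L R ∧
        (∀ i, ((R i).card : ℝ) / M ≤ ((ℓ * (N - ℓ + 1) : ℕ) : ℝ) / N) ∧
        β = (ℓ' : ℝ) / M}
      ≤ ℓ :=
  cyclic_symmetry_achievability_general q K hauto ℓ hℓ
end

section
/- For any single unicast index coding problem G, any fixed finite alphabet A with |A| ≥ 2, and any message length M ≥ 1, the minimum broadcast rate ℓ/M over all valid index codes for G with message length M and locality r = 1 equals (1/M)·min{ a : an a:M coloring of the interference graph of G exists }. In particular, for M = 1 the optimal rate equals the chromatic number χ of the interference graph of G. -/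
open Finset in
lemma converse_lemma {N : ℕ} {K : Fin N → Finset (Fin N)} (hK : ∀ i, i ∉ K i)
    {A : Type} [Fintype A] (hA : 2 ≤ Fintype.card A) {M ℓ : ℕ} (hM : 0 < M)
    {R : Fin N → Finset (Fin ℓ)} (hV : IsValidCode K A M ℓ R)
    (hloc : ∀ i, (R i).card ≤ M) :
    (∀ i, (R i).card = M) ∧
      ∀ i j : Fin N, i ≠ j → (i ∉ K j ∨ j ∉ K i) → Disjoint (R i) (R j) := by
  classical
  obtain ⟨E, hE⟩ := hV
  choose D hD using hE
  have hA1 : 1 < Fintype.card A := hA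
  obtain ⟨a0⟩ : Nonempty A := Fintype.card_pos_iff.mp (by omega)
  have hinj : ∀ (i : Fin N) (x : Fin N → Fin M → A),
      Function.Injective (fun v : Fin M → A =>
        (fun k : {k : Fin ℓ // k ∈ R i} => E (Function.update x i v) k.1)) := by
    intro i x
    have hleft : ∀ v, D i (fun k => E (Function.update x i v) k.1)
        (fun j => x j.1) = v := by
      intro v
      have h1 := hD i (Function.update x i v)
      have h2 : (fun j : {j // j ∈ K i} => Function.update x i v j.1)
          = fun j => x j.1 := by
        funext j
        exact Function.update_of_ne (ne_of_mem_of_not_mem j.2 (hK i)) _ _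
      rw [h2] at h1
      rw [h1, Function.update_self]
    intro v v' h
    have h' : (fun k : {k : Fin ℓ // k ∈ R i} => E (Function.update x i v) k.1)
        = (fun k => E (Function.update x i v') k.1) := h
    have hv := hleft v
    rw [h', hleft v'] at hv
    exact hv.symm
  have hcardR : ∀ i, (R i).card = M := by
    intro i
    have h1 := Fintype.card_le_of_injective _ (hinj i (fun _ _ => a0))
    simp only [Fintype.card_fun, Fintype.card_fin, Fintype.card_coe] at h1
    have h2 := (Nat.pow_le_pow_iff_right hA1).mp h1
    have := hloc i
    omega
  refine ⟨hcardR, ?_⟩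
  have core : ∀ p q : Fin N, p ≠ q → p ∉ K q → ∀ k, k ∈ R p → k ∈ R q → False := by
    intro p q hpq hpKq k hkp hkq
    set x0 : Fin N → Fin M → A := fun _ _ => a0 with hx0
    set X : (Fin M → A) → (Fin M → A) → Fin N → Fin M → A :=
      fun u v => Function.update (Function.update x0 p u) q v with hX
    have hXcomm : ∀ u v, X u v = Function.update (Function.update x0 q v) p u := by
      intro u v
      exact Function.update_comm hpq u v x0
    set D' : ({k : Fin ℓ // k ∈ R q} → A) → (Fin M → A) :=
      fun y => D q y (fun j => x0 j.1) with hD'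
    have hstep : ∀ u v, D' (fun k => E (X u v) k.1) = v := by
      intro u v
      have h1 := hD q (X u v)
      have h2 : (fun j : {j // j ∈ K q} => X u v j.1) = fun j => x0 j.1 := by
        funext j
        obtain ⟨j, hj⟩ := j
        have hjq : j ≠ q := ne_of_mem_of_not_mem hj (hK q)
        have hjp : j ≠ p := ne_of_mem_of_not_mem hj hpKq
        simp [hX, Function.update_of_ne hjq, Function.update_of_ne hjp]
      rw [h2] at h1
      have h3 : X u v q = v := by simp [hX]
      rw [h3] at h1
      exact h1
    have hDsurj : Function.Surjective D' := fun v => ⟨_, hstep (fun _ => a0) v⟩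
    have hDbij : Function.Bijective D' := by
      rw [Fintype.bijective_iff_surjective_and_card]
      refine ⟨hDsurj, ?_⟩
      simp [Fintype.card_fun, Fintype.card_coe, hcardR q]
    have hconst : ∀ u u' v (k' : Fin ℓ) (hk' : k' ∈ R q),
        E (X u v) k' = E (X u' v) k' := by
      intro u u' v k' hk'
      have h := hDbij.1 ((hstep u v).trans (hstep u' v).symm)
      exact congrFun h ⟨k', hk'⟩
    set v0 : Fin M → A := fun _ => a0 with hv0
    have hinj2 : Function.Injective (fun u : Fin M → A =>
        (fun k' : {k' : Fin ℓ // k' ∈ (R p).erase k} => E (X u v0) k'.1)) := by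
      intro u u' h
      apply hinj p (Function.update x0 q v0)
      funext k'
      show E (Function.update (Function.update x0 q v0) p u) k'.1
          = E (Function.update (Function.update x0 q v0) p u') k'.1
      rw [← hXcomm u v0, ← hXcomm u' v0]
      by_cases hkk : k'.1 = k
      · rw [hkk]
        exact hconst u u' v0 k hkq
      · exact congrFun h ⟨k'.1, Finset.mem_erase.mpr ⟨hkk, k'.2⟩⟩
    have h1 := Fintype.card_le_of_injective _ hinj2
    simp only [Fintype.card_fun, Fintype.card_fin, Fintype.card_coe] at h1
    rw [Finset.card_erase_of_mem hkp, hcardR p] at h1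
    have h2 := (Nat.pow_le_pow_iff_right hA1).mp h1
    omega
  intro i j hij hcase
  rw [Finset.disjoint_left]
  intro k hki hkj
  rcases hcase with h | h
  · exact core i j hij h k hki hkj
  · exact core j i hij.symm h k hkj hki

open Finset in
lemma achieve_lemma {N : ℕ} {K : Fin N → Finset (Fin N)}
    {A : Type} [Fintype A] (hA : 2 ≤ Fintype.card A) {M a : ℕ}
    {C : Fin N → Finset (Fin a)} (hcard : ∀ i, (C i).card = M)
    (hdisj : ∀ i j : Fin N, i ≠ j → (i ∉ K j ∨ j ∉ K i) → Disjoint (C i) (C j)) :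
    IsValidCode K A M a C := by
  classical
  haveI : NeZero (Fintype.card A) := ⟨by omega⟩
  obtain ⟨e⟩ : Nonempty (A ≃ ZMod (Fintype.card A)) :=
    ⟨Fintype.equivOfCardEq (by simp [ZMod.card])⟩
  set σ : ∀ i : Fin N, {k : Fin a // k ∈ C i} ≃ Fin M :=
    fun i => (C i).equivFinOfCardEq (hcard i) with hσ
  have hmem : ∀ (i j : Fin N) (k : Fin a), k ∈ C i → k ∈ C j → j ≠ i → j ∈ K i := by
    intro i j k hi hj hne
    by_contra hjK
    exact (Finset.disjoint_left.mp (hdisj i j (Ne.symm hne) (Or.inr hjK)) hi) hj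
  refine ⟨fun x k => e.symm (∑ j : Fin N,
      if h : k ∈ C j then e (x j (σ j ⟨k, h⟩)) else 0), fun i => ?_⟩
  refine ⟨fun y z m =>
    e.symm (e (y ⟨((σ i).symm m).1, ((σ i).symm m).2⟩) -
      ∑ j : Fin N, if h : ((σ i).symm m).1 ∈ C j ∧ j ≠ i then
        e (z ⟨j, hmem i j ((σ i).symm m).1 ((σ i).symm m).2 h.1 h.2⟩
            (σ j ⟨((σ i).symm m).1, h.1⟩)) else 0), ?_⟩
  intro x
  funext m
  set k : {k : Fin a // k ∈ C i} := (σ i).symm m with hk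
  show e.symm (e (e.symm (∑ j : Fin N, if h : k.1 ∈ C j then e (x j (σ j ⟨k.1, h⟩)) else 0))
      - ∑ j : Fin N, if h : k.1 ∈ C j ∧ j ≠ i then e (x j (σ j ⟨k.1, h.1⟩)) else 0) = x i m
  rw [Equiv.apply_symm_apply, ← Finset.sum_sub_distrib]
  have hsum : (∑ j : Fin N,
      ((if h : k.1 ∈ C j then e (x j (σ j ⟨k.1, h⟩)) else 0)
       - (if h : k.1 ∈ C j ∧ j ≠ i then e (x j (σ j ⟨k.1, h.1⟩)) else 0)))
      = e (x i m) := by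
    rw [Finset.sum_eq_single i]
    · rw [dif_pos k.2, dif_neg (by simp)]
      have : (⟨k.1, k.2⟩ : {k : Fin a // k ∈ C i}) = (σ i).symm m := by
        rw [hk]
      rw [this, Equiv.apply_symm_apply, sub_zero]
    · intro j _ hji
      by_cases hjC : k.1 ∈ C j
      · rw [dif_pos hjC, dif_pos ⟨hjC, hji⟩, sub_self]
      · rw [dif_neg hjC, dif_neg (by tauto), sub_self]
    · intro h
      exact absurd (Finset.mem_univ i) h
  rw [hsum, Equiv.symm_apply_apply]

open Finset in
lemma trivial_coloring (N M : ℕ) : ∃ C : Fin N → Finset (Fin (M * N)),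
    (∀ i, (C i).card = M) ∧ ∀ i j : Fin N, i ≠ j → Disjoint (C i) (C j) := by
  classical
  refine ⟨fun i => Finset.univ.map
    ⟨fun m : Fin M => finProdFinEquiv (m, i), fun m m' h => by
      have := finProdFinEquiv.injective h
      exact (Prod.ext_iff.mp this).1⟩, fun i => by simp, ?_⟩
  intro i j hij
  rw [Finset.disjoint_left]
  rintro k hki hkj
  simp only [Finset.mem_map, Finset.mem_univ, Function.Embedding.coeFn_mk, true_and] at hki hkj
  obtain ⟨m, hm⟩ := hki
  obtain ⟨m', hm'⟩ := hkj
  have := finProdFinEquiv.injective (hm.trans hm'.symm)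
  exact hij (Prod.ext_iff.mp this).2

/-- For any single unicast problem `G`, finite alphabet `A` with `|A| ≥ 2`,
and message length `M ≥ 1`, the minimum broadcast rate `ℓ/M` over valid index codes with
message length `M` and locality `1` equals `(1/M)·min{a : an a:M coloring of the
interference graph of G exists}`. (For `M = 1` this is the chromatic number.) -/
theorem fixed_message_length_locality_one_rate
    {N : ℕ} (hN : 0 < N) (K : Fin N → Finset (Fin N)) (hK : ∀ i, i ∉ K i)
    (A : Type) [Fintype A] (hA : 2 ≤ Fintype.card A) (M : ℕ) (hM : 0 < M) :
    sInf {β : ℝ | ∃ (ℓ : ℕ) (R : Fin N → Finset (Fin ℓ)),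
        IsValidCode K A M ℓ R ∧ (∀ i, (R i).card ≤ M) ∧ β = (ℓ : ℝ) / M}
      = ((sInf {a : ℕ | ∃ C : Fin N → Finset (Fin a), (∀ i, (C i).card = M) ∧
          ∀ i j : Fin N, i ≠ j → (i ∉ K j ∨ j ∉ K i) → Disjoint (C i) (C j)} : ℕ) : ℝ)
        / (M : ℝ) := by
  classical
  set Scol : Set ℕ := {a : ℕ | ∃ C : Fin N → Finset (Fin a), (∀ i, (C i).card = M) ∧
      ∀ i j : Fin N, i ≠ j → (i ∉ K j ∨ j ∉ K i) → Disjoint (C i) (C j)} with hScol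
  have hequiv : ∀ ℓ : ℕ, (∃ R : Fin N → Finset (Fin ℓ),
      IsValidCode K A M ℓ R ∧ ∀ i, (R i).card ≤ M) ↔ ℓ ∈ Scol := by
    intro ℓ
    constructor
    · rintro ⟨R, hV, hloc⟩
      obtain ⟨hc, hd⟩ := converse_lemma hK hA hM hV hloc
      exact ⟨R, hc, hd⟩
    · rintro ⟨C, hc, hd⟩
      exact ⟨C, achieve_lemma hA hc hd, fun i => le_of_eq (hc i)⟩
  have hScolne : Scol.Nonempty := by
    obtain ⟨C, hc, hd⟩ := trivial_coloring N M
    exact ⟨M * N, C, hc, fun i j hij _ => hd i j hij⟩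
  have hmemn : sInf Scol ∈ Scol := Nat.sInf_mem hScolne
  have hMpos : (0 : ℝ) < M := by exact_mod_cast hM
  have hmemβ : ((sInf Scol : ℕ) : ℝ) / M ∈ {β : ℝ | ∃ (ℓ : ℕ) (R : Fin N → Finset (Fin ℓ)),
      IsValidCode K A M ℓ R ∧ (∀ i, (R i).card ≤ M) ∧ β = (ℓ : ℝ) / M} := by
    obtain ⟨R, hV, hloc⟩ := (hequiv (sInf Scol)).mpr hmemn
    exact ⟨sInf Scol, R, hV, hloc, rfl⟩
  have hlb : ∀ β ∈ {β : ℝ | ∃ (ℓ : ℕ) (R : Fin N → Finset (Fin ℓ)),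
      IsValidCode K A M ℓ R ∧ (∀ i, (R i).card ≤ M) ∧ β = (ℓ : ℝ) / M},
      ((sInf Scol : ℕ) : ℝ) / M ≤ β := by
    rintro β ⟨ℓ, R, hV, hloc, rfl⟩
    have h1 : sInf Scol ≤ ℓ := Nat.sInf_le ((hequiv ℓ).mp ⟨R, hV, hloc⟩)
    have h2 : ((sInf Scol : ℕ) : ℝ) ≤ (ℓ : ℝ) := by exact_mod_cast h1
    gcongr
  exact le_antisymm (csInf_le ⟨_, hlb⟩ hmemβ) (le_csInf ⟨_, hmemβ⟩ hlb)
end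

section
/- Let (E, D_1,...,D_N) be a valid index code for a single unicast index coding problem G with message length M, codelength ℓ, query sets R_1,...,R_N, and locality r = 1 (equivalently |R_i| = M for every i). Then for every edge {i,j} of the interference graph of G (i.e., whenever i ∉ K_j or j ∉ K_i), the query sets are disjoint: R_i ∩ R_j = ∅. -/
/-- For a valid index code with locality `r = 1` (i.e. `|R_i| = M` for all
`i`), the query sets of any two receivers adjacent in the interference graph (`i ≠ j` with
`i ∉ K_j` or `j ∉ K_i`) are disjoint. -/
theorem locality_one_disjoint_queries
    {N M ℓ : ℕ} (hM : 0 < M)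
    (K : Fin N → Finset (Fin N)) (hK : ∀ i, i ∉ K i)
    (A : Type) [Fintype A] (hA : 2 ≤ Fintype.card A)
    (R : Fin N → Finset (Fin ℓ))
    (hvalid : IsValidCode K A M ℓ R)
    (hloc : ∀ i, (R i).card = M) :
    ∀ i j : Fin N, i ≠ j → (i ∉ K j ∨ j ∉ K i) → Disjoint (R i) (R j) := by
  classical
  obtain ⟨E, hE⟩ := hvalid
  have hnt : Nontrivial A := Fintype.one_lt_card_iff_nontrivial.1 hA
  -- key: for any receiver `i` and any base point `x`, the map from `x_i` to the
  -- restriction of the codeword to `R i` is surjective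
  have key : ∀ (i : Fin N) (x : Fin N → Fin M → A),
      Function.Surjective (fun y : Fin M → A =>
        (fun k : {k : Fin ℓ // k ∈ R i} => E (Function.update x i y) k.1)) := by
    intro i x
    obtain ⟨D, hD⟩ := hE i
    have hinj : Function.Injective (fun y : Fin M → A =>
        (fun k : {k : Fin ℓ // k ∈ R i} => E (Function.update x i y) k.1)) := by
      intro y₁ y₂ h
      have hside : ∀ y : Fin M → A,
          (fun t : {j // j ∈ K i} => Function.update x i y t.1)
            = (fun t : {j // j ∈ K i} => x t.1) := by
        intro y
        funext t
        have ht : t.1 ≠ i := fun ht => hK i (by simpa [ht] using t.2)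
        simp [Function.update_of_ne ht]
      have h1 := hD (Function.update x i y₁)
      have h2 := hD (Function.update x i y₂)
      rw [hside, Function.update_self] at h1 h2
      have h'' : (fun k : {k : Fin ℓ // k ∈ R i} => E (Function.update x i y₁) k.1)
          = (fun k : {k : Fin ℓ // k ∈ R i} => E (Function.update x i y₂) k.1) := h
      rw [← h1, ← h2, h'']
    have hcard : Fintype.card (Fin M → A)
        = Fintype.card ({k : Fin ℓ // k ∈ R i} → A) := by
      simp [Fintype.card_fun, Fintype.card_coe, hloc i]
    exact ((Fintype.bijective_iff_injective_and_card _).2 ⟨hinj, hcard⟩).2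
  -- main asymmetric lemma
  have main : ∀ i j : Fin N, i ≠ j → i ∉ K j → Disjoint (R i) (R j) := by
    intro i j hij hiKj
    rw [Finset.disjoint_left]
    intro k hki hkj
    exfalso
    set x : Fin N → Fin M → A := fun _ _ => Classical.arbitrary A with hx
    obtain ⟨b, hb⟩ := exists_ne (E x k)
    -- build x' differing from x only in message i, with E x' k = b
    obtain ⟨y, hy⟩ := key i x
      (Function.update (fun k' : {k : Fin ℓ // k ∈ R i} => E x k'.1) ⟨k, hki⟩ b)
    set x' : Fin N → Fin M → A := Function.update x i y with hx'
    have hEx'k : E x' k = b := by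
      have := congrFun hy ⟨k, hki⟩
      simpa using this
    -- decoder for receiver j
    obtain ⟨D, hD⟩ := hE j
    have hDx : ∀ z : Fin M → A,
        D (fun k' : {k : Fin ℓ // k ∈ R j} => E (Function.update x j z) k'.1)
          (fun t : {t // t ∈ K j} => x t.1) = z := by
      intro z
      have h := hD (Function.update x j z)
      have hside : (fun t : {t // t ∈ K j} => Function.update x j z t.1)
          = (fun t : {t // t ∈ K j} => x t.1) := by
        funext t
        have ht : t.1 ≠ j := fun ht => hK j (by simpa [ht] using t.2)
        simp [Function.update_of_ne ht]
      rw [hside, Function.update_self] at h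
      exact h
    have hDx' : ∀ z : Fin M → A,
        D (fun k' : {k : Fin ℓ // k ∈ R j} => E (Function.update x' j z) k'.1)
          (fun t : {t // t ∈ K j} => x t.1) = z := by
      intro z
      have h := hD (Function.update x' j z)
      have hside : (fun t : {t // t ∈ K j} => Function.update x' j z t.1)
          = (fun t : {t // t ∈ K j} => x t.1) := by
        funext t
        have htj : t.1 ≠ j := fun ht => hK j (by simpa [ht] using t.2)
        have hti : t.1 ≠ i := fun ht => hiKj (by simpa [ht] using t.2)
        simp [Function.update_of_ne htj, hx', Function.update_of_ne hti]
      rw [hside, Function.update_self] at h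
      exact h
    -- target: the restriction of E x' to R j
    obtain ⟨z, hz⟩ := key j x (fun k' : {k : Fin ℓ // k ∈ R j} => E x' k'.1)
    have hz' : z = x j := by
      have h1 := hDx z
      have hz'' : (fun k' : {k : Fin ℓ // k ∈ R j} => E (Function.update x j z) k'.1)
          = (fun k' : {k : Fin ℓ // k ∈ R j} => E x' k'.1) := hz
      rw [hz''] at h1
      have h2 := hDx' (x j)
      have hx'j : x' j = x j := by simp [hx', Function.update_of_ne (Ne.symm hij)]
      have hupd : Function.update x' j (x j) = x' := by
        rw [← hx'j, Function.update_eq_self]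
      rw [hupd] at h2
      rw [← h1]
      exact h2
    rw [hz'] at hz
    have : E x k = E x' k := by
      have := congrFun hz ⟨k, hkj⟩
      simpa [Function.update_eq_self] using this
    rw [hEx'k] at this
    exact hb this.symm
  intro i j hij h
  rcases h with h | h
  · exact main i j hij h
  · exact (main j i hij.symm h).symm
end

section
/- Any valid index code for a single unicast index coding problem G with locality r = 1 (so in particular |R_i| = M for all i) has broadcast rate β = ℓ/M ≥ χ_f(interference graph of G); indeed, for such a code the family of query sets {R_1,...,R_N} forms an ℓ:M coloring of the interference graph of G. -/
lemma key_disjoint {N M ℓ : ℕ} (hM : 0 < M)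
    (K : Fin N → Finset (Fin N)) (hK : ∀ i, i ∉ K i)
    (A : Type) [Fintype A] (hA : 2 ≤ Fintype.card A)
    (R : Fin N → Finset (Fin ℓ))
    (hvalid : IsValidCode K A M ℓ R)
    (hloc : ∀ i, (R i).card = M)
    (i j : Fin N) (hij : i ≠ j) (hjK : j ∉ K i) :
    Disjoint (R i) (R j) := by
  classical
  haveI : Nonempty A := Fintype.card_pos_iff.mp (by omega)
  obtain ⟨E, hE⟩ := hvalid
  obtain ⟨Di, hDi⟩ := hE i
  obtain ⟨Dj, hDj⟩ := hE j
  rw [Finset.disjoint_left]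
  by_contra hcon
  push_neg at hcon
  obtain ⟨k, hki, hkj⟩ := hcon
  set x0 : Fin N → Fin M → A := fun _ _ => Classical.arbitrary A with hx0
  -- side info seen by decoder i
  set s : {j' : Fin N // j' ∈ K i} → Fin M → A := fun j' => x0 j'.1 with hs
  -- F z y : codeword on R i when x_i = z, x_j = y, rest default
  set F : (Fin M → A) → (Fin M → A) → ({k' : Fin ℓ // k' ∈ R i} → A) :=
    fun z y => fun k' => E (Function.update (Function.update x0 j y) i z) k'.1 with hF
  have key : ∀ z y, Di (F z y) s = z := by
    intro z y
    have h := hDi (Function.update (Function.update x0 j y) i z)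
    have h2 : (fun j' : {j' : Fin N // j' ∈ K i} =>
        Function.update (Function.update x0 j y) i z j'.1) = s := by
      funext j'
      have hne1 : j'.1 ≠ i := fun h' => hK i (by have h2 := j'.2; rw [h'] at h2; exact h2)
      have hne2 : j'.1 ≠ j := fun h' => hjK (by have h2 := j'.2; rw [h'] at h2; exact h2)
      simp [Function.update_of_ne hne1, Function.update_of_ne hne2, hs]
    rw [h2] at h
    simpa using h
  have cardeq : ∀ (m : Fin N), Fintype.card ({k' : Fin ℓ // k' ∈ R m} → A)
      = Fintype.card (Fin M → A) := by
    intro m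
    simp [Fintype.card_fun, Fintype.card_coe, hloc m]
  -- for each y, z ↦ F z y is bijective
  have hbij : ∀ y, Function.Bijective (fun z => F z y) := by
    intro y
    have hinj : Function.Injective (fun z => F z y) := by
      intro z z' h
      have h' : F z y = F z' y := h
      have := key z y
      rw [h', key z' y] at this
      exact this.symm
    exact (Fintype.bijective_iff_injective_and_card _).mpr ⟨hinj, (cardeq i).symm⟩
  -- codeword on R i is independent of x_j
  have indep : ∀ z y y', F z y = F z y' := by
    intro z y y'
    obtain ⟨z', hz'⟩ := (hbij y).2 (F z y')
    have hz'' : F z' y = F z y' := hz'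
    have h1 : z' = z := by
      have := key z' y
      rw [hz'', key z y'] at this
      exact this.symm
    subst h1
    exact hz''
  -- hence E (update x0 j y) k is independent of y, for our k ∈ R i
  have indepE : ∀ y y', E (Function.update x0 j y) k = E (Function.update x0 j y') k := by
    intro y y'
    have h := congrFun (indep (x0 i) y y') ⟨k, hki⟩
    have hu : ∀ y : Fin M → A,
        Function.update (Function.update x0 j y) i (x0 i) = Function.update x0 j y := by
      intro y
      have hxy : x0 i = Function.update x0 j y i := by
        rw [Function.update_of_ne hij]
      rw [hxy, Function.update_eq_self]
    have e : ∀ y : Fin M → A, F (x0 i) y ⟨k, hki⟩ = E (Function.update x0 j y) k :=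
      fun y => congrArg (fun x => E x k) (hu y)
    rw [e y, e y'] at h
    exact h
  -- decoder j: G y = codeword on R j
  set G : (Fin M → A) → ({k' : Fin ℓ // k' ∈ R j} → A) :=
    fun y => fun k' => E (Function.update x0 j y) k'.1 with hG
  set s2 : {j' : Fin N // j' ∈ K j} → Fin M → A := fun j' => x0 j'.1 with hs2
  have key2 : ∀ y, Dj (G y) s2 = y := by
    intro y
    have h := hDj (Function.update x0 j y)
    have h2 : (fun j' : {j' : Fin N // j' ∈ K j} =>
        Function.update x0 j y j'.1) = s2 := by
      funext j'
      have hne : j'.1 ≠ j := fun h' => hK j (by have h2 := j'.2; rw [h'] at h2; exact h2)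
      simp [Function.update_of_ne hne, hs2]
    rw [h2] at h
    simpa using h
  -- restrict G to (R j).erase k : still injective
  set G' : (Fin M → A) → ({k' : Fin ℓ // k' ∈ (R j).erase k} → A) :=
    fun y => fun k' => G y ⟨k'.1, Finset.mem_of_mem_erase k'.2⟩ with hG'
  have hG'inj : Function.Injective G' := by
    intro y y' h
    have hGG : G y = G y' := by
      funext k'
      by_cases hkk : k'.1 = k
      · have e1 : G y k' = E (Function.update x0 j y) k := by
          simp [hG, hkk]
        have e2 : G y' k' = E (Function.update x0 j y') k := by
          simp [hG, hkk]
        rw [e1, e2, indepE y y']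
      · have hmem : k'.1 ∈ (R j).erase k := Finset.mem_erase.mpr ⟨hkk, k'.2⟩
        have := congrFun h ⟨k'.1, hmem⟩
        simpa [hG'] using this
    have := key2 y
    rw [hGG, key2 y'] at this
    exact this.symm
  have hle := Fintype.card_le_of_injective G' hG'inj
  have hcard1 : Fintype.card (Fin M → A) = Fintype.card A ^ M := by
    simp [Fintype.card_fun]
  have hcard2 : Fintype.card ({k' : Fin ℓ // k' ∈ (R j).erase k} → A)
      = Fintype.card A ^ (M - 1) := by
    rw [Fintype.card_fun, Fintype.card_coe, Finset.card_erase_of_mem hkj, hloc j]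
  rw [hcard1, hcard2] at hle
  have hlt : Fintype.card A ^ (M - 1) < Fintype.card A ^ M :=
    Nat.pow_lt_pow_right (by omega) (by omega)
  omega

/-- Any valid index code with locality `r = 1` (so `|R_i| = M` for all `i`)
has its query sets forming an `ℓ:M` coloring of the interference graph, and its broadcast
rate `ℓ/M` is at least the fractional chromatic number of the interference graph. -/
theorem locality_one_rate_lower_bound
    {N M ℓ : ℕ} (hM : 0 < M)
    (K : Fin N → Finset (Fin N)) (hK : ∀ i, i ∉ K i)
    (A : Type) [Fintype A] (hA : 2 ≤ Fintype.card A)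
    (R : Fin N → Finset (Fin ℓ))
    (hvalid : IsValidCode K A M ℓ R)
    (hloc : ∀ i, (R i).card = M) :
    (∀ i j : Fin N, i ≠ j → (i ∉ K j ∨ j ∉ K i) → Disjoint (R i) (R j)) ∧
    sInf {x : ℝ | ∃ a b : ℕ, 0 < a ∧ 0 < b ∧
        (∃ C : Fin N → Finset (Fin a), (∀ i, (C i).card = b) ∧
          ∀ i j : Fin N, i ≠ j → (i ∉ K j ∨ j ∉ K i) → Disjoint (C i) (C j)) ∧
        x = (a : ℝ) / b}
      ≤ (ℓ : ℝ) / M := by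
  have hdisj : ∀ i j : Fin N, i ≠ j → (i ∉ K j ∨ j ∉ K i) → Disjoint (R i) (R j) := by
    intro i j hij hK'
    rcases hK' with h | h
    · exact (key_disjoint hM K hK A hA R hvalid hloc j i hij.symm h).symm
    · exact key_disjoint hM K hK A hA R hvalid hloc i j hij h
  refine ⟨hdisj, ?_⟩
  set S : Set ℝ := {x : ℝ | ∃ a b : ℕ, 0 < a ∧ 0 < b ∧
        (∃ C : Fin N → Finset (Fin a), (∀ i, (C i).card = b) ∧
          ∀ i j : Fin N, i ≠ j → (i ∉ K j ∨ j ∉ K i) → Disjoint (C i) (C j)) ∧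
        x = (a : ℝ) / b} with hS
  have hbdd : BddBelow S := by
    refine ⟨0, fun x hx => ?_⟩
    obtain ⟨a, b, _, _, _, hx⟩ := hx
    rw [hx]
    positivity
  by_cases hl : 0 < ℓ
  · exact csInf_le hbdd ⟨ℓ, M, hl, hM, ⟨R, hloc, hdisj⟩, rfl⟩
  · -- ℓ = 0; then N = 0 (else R i nonempty in Fin 0), and sInf S ≤ 0 = ℓ/M
    have hl0 : ℓ = 0 := by omega
    have hNfalse : ∀ _ : Fin N, False := by
      intro i
      have : 0 < (R i).card := by rw [hloc i]; exact hM
      obtain ⟨k, _⟩ := Finset.card_pos.mp this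
      exact absurd k.isLt (by omega)
    have hmem : ∀ b : ℕ, 0 < b → (1 : ℝ) / b ∈ S := by
      intro b hb
      exact ⟨1, b, one_pos, hb, ⟨fun i => (hNfalse i).elim, fun i => (hNfalse i).elim,
        fun i => (hNfalse i).elim⟩, by norm_num⟩
    have hne : S.Nonempty := ⟨_, hmem 1 one_pos⟩
    have : sInf S ≤ 0 := by
      rw [Real.sInf_le_iff hbdd hne]
      intro ε hε
      obtain ⟨n, hn⟩ := exists_nat_one_div_lt hε
      exact ⟨1 / (n + 1 : ℕ), hmem (n + 1) (Nat.succ_pos n), by push_cast; linarith⟩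
    rw [hl0]
    simpa using this
end

section
/- Let G be a single unicast index coding problem on [N] whose interference graph admits an a:b coloring for positive integers a, b. Then, over any finite alphabet A with |A| ≥ 2, there exists a valid index code for G with message length M = b, codelength ℓ = a, and locality r = 1 (each receiver queries exactly b codeword symbols). In particular, broadcast rate a/b is achievable with locality 1. -/
/-!
Turn the alphabet into an abelian group and let codeword symbol `k` be the sum of the message
symbols that the coloring places on color `k`: message `x i` is written, in order, on the `b`
colors of `C i`. Receiver `i` reads the colors of `C i`. Any other message `x j` contributing to
such a color shares it with `x i`, so `j` is not adjacent to `i` in the interference graph, i.e.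
`x j` is side information of `i`. Hence re-encoding the side information (with unknown messages
set to `0`) and subtracting it from the queried symbols leaves exactly the symbols of `x i`.
-/

namespace IndexCode

variable {ι κ G : Type*} [Fintype ι] [DecidableEq κ] [AddCommGroup G] {b : ℕ}

def superpose {C : ι → Finset κ} (σ : ∀ i, C i ≃ Fin b) (x : ι → Fin b → G) (k : κ) : G :=
  ∑ i, if h : k ∈ C i then x i (σ i ⟨k, h⟩) else 0

variable {C : ι → Finset κ} (σ : ∀ i, C i ≃ Fin b)

theorem superpose_sub (x y : ι → Fin b → G) :
    superpose σ (x - y) = superpose σ x - superpose σ y := by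
  funext k
  simp only [superpose, Pi.sub_apply, ← Finset.sum_sub_distrib]
  refine Fintype.sum_congr _ _ fun i => ?_
  split_ifs <;> simp

theorem superpose_apply_of_mem {x : ι → Fin b → G} {i : ι} {k : κ} (hk : k ∈ C i)
    (hx : ∀ j ≠ i, k ∈ C j → x j = 0) :
    superpose σ x k = x i (σ i ⟨k, hk⟩) := by
  rw [superpose, Fintype.sum_eq_single i fun j hj => ?_, dif_pos hk]
  split_ifs with hkj
  · simp [hx j hj hkj]
  · rfl

end IndexCode

open IndexCode in
theorem isValidCode_superpose {N a b : ℕ} {A : Type} [AddCommGroup A]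
    (K : Fin N → Finset (Fin N)) (hK : ∀ i, i ∉ K i)
    (C : Fin N → Finset (Fin a)) (hC : ∀ i, (C i).card = b)
    (hdisj : ∀ i j : Fin N, i ≠ j → j ∉ K i → Disjoint (C i) (C j)) :
    IsValidCode K A b a C := by
  let σ i : C i ≃ Fin b := Finset.equivFinOfCardEq (hC i)
  refine ⟨superpose σ, fun i => ?_⟩
  let sideInfo (s : {j // j ∈ K i} → Fin b → A) (j : Fin N) : Fin b → A :=
    if h : j ∈ K i then s ⟨j, h⟩ else 0
  refine ⟨fun y s m => y ((σ i).symm m) - superpose σ (sideInfo s) ((σ i).symm m), fun x => ?_⟩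
  funext m
  set k := (σ i).symm m with hkm
  have hunknown : ∀ j ≠ i, k.1 ∈ C j → (x - sideInfo fun j => x j) j = 0 := by
    intro j hji hkj
    by_cases hj : j ∈ K i
    · simp [sideInfo, hj]
    · exact absurd hkj (Finset.disjoint_left.mp (hdisj i j hji.symm hj) k.2)
  show superpose σ x k - superpose σ (sideInfo fun j => x j) k = x i m
  rw [← Pi.sub_apply (superpose σ x), ← superpose_sub, superpose_apply_of_mem σ k.2 hunknown]
  simp [sideInfo, hK i, hkm]

theorem Fintype.nonempty_addCommGroup (A : Type*) [Fintype A] (hA : Fintype.card A ≠ 0) :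
    Nonempty (AddCommGroup A) :=
  haveI : NeZero (Fintype.card A) := ⟨hA⟩
  ⟨(Fintype.equivOfCardEq (ZMod.card _).symm : A ≃ ZMod (Fintype.card A)).addCommGroup⟩

theorem fractional_coloring_achievability_general
    {N a b : ℕ}
    (K : Fin N → Finset (Fin N)) (hK : ∀ i, i ∉ K i)
    (A : Type) [Fintype A] (hA : 2 ≤ Fintype.card A)
    (C : Fin N → Finset (Fin a)) (hC : ∀ i, (C i).card = b)
    (hdisj : ∀ i j : Fin N, i ≠ j → (i ∉ K j ∨ j ∉ K i) → Disjoint (C i) (C j)) :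
    ∃ R : Fin N → Finset (Fin a),
      IsValidCode K A b a R ∧ ∀ i, (R i).card = b := by
  obtain ⟨_⟩ := Fintype.nonempty_addCommGroup A (by omega)
  exact ⟨C, isValidCode_superpose K hK C hC fun i j hij hj => hdisj i j hij (Or.inr hj), hC⟩

/-- If the interference graph of `G` admits an `a:b` coloring, then over
any finite alphabet `A` with `|A| ≥ 2` there is a valid index code for `G` with message
length `b`, codelength `a`, and locality `1`: each receiver queries exactly `b` codeword
symbols. In particular broadcast rate `a/b` is achievable with locality `1`. -/
theorem fractional_coloring_achievability
    {N a b : ℕ} (ha : 0 < a) (hb : 0 < b)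
    (K : Fin N → Finset (Fin N)) (hK : ∀ i, i ∉ K i)
    (A : Type) [Fintype A] (hA : 2 ≤ Fintype.card A)
    (C : Fin N → Finset (Fin a)) (hC : ∀ i, (C i).card = b)
    (hdisj : ∀ i j : Fin N, i ≠ j → (i ∉ K j ∨ j ∉ K i) → Disjoint (C i) (C j)) :
    ∃ R : Fin N → Finset (Fin a),
      IsValidCode K A b a R ∧ ∀ i, (R i).card = b :=
  fractional_coloring_achievability_general K hK A hA C hC hdisj
end

section
/- Let N ≥ 3 and let G be the directed N-cycle. The message length M of any valid index code for G whose locality equals 2(N−1)/N (i.e., max_i |R_i|/M = 2(N−1)/N) satisfies M ≥ N if N is odd, and M ≥ N/2 if N is even. -/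
/-- For the directed `N`-cycle (`K i = {i+1}` in `Fin N`) with `N ≥ 3`,
any valid index code whose locality equals `2(N−1)/N` (i.e. `max_i |R_i|/M = 2(N−1)/N`)
has message length `M ≥ N` if `N` is odd, and `M ≥ N/2` if `N` is even. -/
theorem message_length_for_locality_two_N_minus_one_over_N
    {N : ℕ} [NeZero N] (hN : 3 ≤ N)
    (A : Type) [Fintype A] (hA : 2 ≤ Fintype.card A)
    {M ℓ : ℕ} (hM : 0 < M)
    (R : Fin N → Finset (Fin ℓ))
    (hvalid : IsValidCode (fun i : Fin N => {i + 1}) A M ℓ R)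
    (hloc_le : ∀ i, ((R i).card : ℝ) / M ≤ 2 * ((N : ℝ) - 1) / N)
    (hloc_eq : ∃ i, ((R i).card : ℝ) / M = 2 * ((N : ℝ) - 1) / N) :
    (Odd N → N ≤ M) ∧ (Even N → N / 2 ≤ M) := by
  obtain ⟨i, hi⟩ := hloc_eq
  set c := (R i).card with hc
  have hM0 : (0:ℝ) < M := by exact_mod_cast hM
  have hN0 : (0:ℝ) < N := by exact_mod_cast (by omega : 0 < N)
  have hreal : (c:ℝ) * N = 2 * ((N:ℝ) - 1) * M := by
    field_simp at hi; linarith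
  have hcast : ((N:ℝ) - 1) = ((N-1 : ℕ):ℝ) := by
    push_cast [Nat.cast_sub (by omega : 1 ≤ N)]; ring
  rw [hcast] at hreal
  have hnat : c * N = 2 * (N-1) * M := by exact_mod_cast hreal
  have hdvd : N ∣ (N-1) * (2 * M) := by
    refine ⟨c, ?_⟩
    rw [show (N-1) * (2*M) = 2 * (N-1) * M from by ring, ← hnat]; ring
  have hcop : Nat.Coprime N (N-1) := by
    have h : N - 1 + 1 = N := by omega
    rw [← h]
    simp [Nat.Coprime, Nat.gcd_comm (N-1+1) (N-1), Nat.gcd_add_one]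
  have hdvd2 : N ∣ 2 * M := hcop.dvd_of_dvd_mul_left hdvd
  constructor
  · intro hodd
    have hcop2 : Nat.Coprime N 2 := Nat.coprime_two_right.mpr hodd
    exact Nat.le_of_dvd hM (hcop2.dvd_of_dvd_mul_left hdvd2)
  · intro heven
    obtain ⟨k, hk⟩ := heven
    have hkd : k ∣ M := by
      have h2 : 2 * k ∣ 2 * M := by rw [show 2*k = N by omega]; exact hdvd2
      exact (mul_dvd_mul_iff_left (two_ne_zero)).mp h2
    have hk2 : N / 2 = k := by omega
    rw [hk2]; exact Nat.le_of_dvd hM hkd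
end
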